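/- arXiv:1409.3013 — 5 statements merged into one kernel-verified Lean document; each statement's English description precedes it below -/
import Mathlib

section
/- Two-blocks estimate. There exists a finite constant C such that for every γ > 0, limsup_{ℓ→∞} limsup_{ε→0⁺} limsup_{n→∞} sup_g { γ·∫ (W_f^ℓ(ξ) − W_f^{⌊εn⌋}(ξ)) g(ξ)² dν_ρ(ξ) + (1/n)·⟨g, L_n g⟩ } ≤ C, where the supremum is over all functions g: Ω_n → ℝ with ∫ g² dν_ρ = 1. -/
open Filter

noncomputable section

/-- Expectation with respect to the product Bernoulli(ρ) measure `ν_ρ` on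
configurations `Ω_n = {0,1}^{ℤ/nℤ}`. -/
def nuExp (n : ℕ) [NeZero n] (ρ : ℝ) (φ : (ZMod n → Bool) → ℝ) : ℝ :=
  ∑ η : ZMod n → Bool, (∏ x : ZMod n, (if η x then ρ else 1 - ρ)) * φ η

/-- The configuration `η^{x,y}`, obtained from `η` by exchanging the values at `x` and `y`. -/
def swapConf {n : ℕ} (η : ZMod n → Bool) (x y : ZMod n) : ZMod n → Bool :=
  fun z => if z = x then η y else if z = y then η x else η z

/-- The shifted configuration `τ_z η`, with `(τ_z η)(x) = η(x + z)`. -/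
def shiftConf {n : ℕ} (η : ZMod n → Bool) (z : ZMod n) : ZMod n → Bool :=
  fun x => η (x + z)

/-- Lift of a (local) function on `{0,1}^ℤ` to the discrete torus `ℤ/nℤ`,
via the canonical projection `ℤ → ℤ/nℤ`. -/
def liftFn {n : ℕ} (c : (ℤ → Bool) → ℝ) (η : ZMod n → Bool) : ℝ :=
  c (fun k => η (k : ZMod n))

/-- The generator of the environment seen from the walker:
`L_n g(η) = n² Σ_x (g(η^{x,x+1}) − g(η)) + n Σ_{z=±1} c^z(η)(g(τ_z η) − g(η))`,
with `c^±` lifted from `{0,1}^ℤ`. -/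
def Lgen (n : ℕ) [NeZero n] (cp cm : (ℤ → Bool) → ℝ) (g : (ZMod n → Bool) → ℝ)
    (η : ZMod n → Bool) : ℝ :=
  (n : ℝ) ^ 2 * ∑ x : ZMod n, (g (swapConf η x (x + 1)) - g η)
    + (n : ℝ) * (liftFn cp η * (g (shiftConf η 1) - g η)
      + liftFn cm η * (g (shiftConf η (-1)) - g η))

/-- `f̄(θ)`: the expectation of a local function `f` with support in `{1,…,m}`
under the product Bernoulli(θ) measure. -/
def fbar (m : ℕ) (f : (ℤ → Bool) → ℝ) (θ : ℝ) : ℝ :=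
  ∑ ζ : Fin m → Bool, (∏ j : Fin m, (if ζ j then θ else 1 - θ)) *
    f (fun k => if h : 1 ≤ k ∧ k ≤ (m : ℤ) then ζ ⟨(k - 1).toNat, by omega⟩ else false)

/-- The empirical density `(1/ℓ) Σ_{x=1}^ℓ ξ(x)` of the block `{1,…,ℓ}`. -/
def blockAvg (n : ℕ) [NeZero n] (ℓ : ℕ) (η : ZMod n → Bool) : ℝ :=
  (1 / (ℓ : ℝ)) * ∑ x ∈ Finset.Icc 1 ℓ, (if η ((x : ℤ) : ZMod n) then (1 : ℝ) else 0)

/-- `W_f^ℓ(ξ) = f(ξ) − f̄((1/ℓ) Σ_{x=1}^ℓ ξ(x))`. -/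
def Wf (n : ℕ) [NeZero n] (m : ℕ) (f : (ℤ → Bool) → ℝ) (ℓ : ℕ) (η : ZMod n → Bool) : ℝ :=
  liftFn f η - fbar m f (blockAvg n ℓ η)

/-- The variational quantity
`sup_g { γ ∫ (W_f^ℓ − W_f^{⌊εn⌋}) g² dν_ρ + (1/n) ⟨g, L_n g⟩ }`, the supremum being
over all `g : Ω_n → ℝ` with `∫ g² dν_ρ = 1` (an extended real; `⊥` for `n = 0`). -/
def twoBlocksSup (ρ : ℝ) (cp cm f : (ℤ → Bool) → ℝ) (m : ℕ) (γ : ℝ) (ℓ : ℕ) (ε : ℝ)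
    (n : ℕ) : EReal :=
  if h : n = 0 then ⊥
  else
    letI : NeZero n := ⟨h⟩
    sSup {v : EReal | ∃ g : (ZMod n → Bool) → ℝ,
      nuExp n ρ (fun η => (g η) ^ 2) = 1 ∧
      v = ((γ * nuExp n ρ (fun η =>
              (Wf n m f ℓ η - Wf n m f ⌊ε * (n : ℝ)⌋₊ η) * (g η) ^ 2)
            + (1 / (n : ℝ)) * nuExp n ρ (fun η => g η * Lgen n cp cm g η) : ℝ) : EReal)}

namespace TB

variable {n : ℕ} [NeZero n] {ρ : ℝ}

/-- the weight of a configuration -/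
def w (n : ℕ) [NeZero n] (ρ : ℝ) (η : ZMod n → Bool) : ℝ :=
  ∏ x : ZMod n, (if η x then ρ else 1 - ρ)

lemma nuExp_def (φ : (ZMod n → Bool) → ℝ) :
    nuExp n ρ φ = ∑ η : ZMod n → Bool, w n ρ η * φ η := rfl

lemma w_nonneg (h0 : 0 ≤ ρ) (h1 : ρ ≤ 1) (η : ZMod n → Bool) : 0 ≤ w n ρ η :=
  Finset.prod_nonneg fun x _ => by split <;> linarith

lemma sum_w (ρ : ℝ) : ∑ η : ZMod n → Bool, w n ρ η = 1 := by
  have h := Finset.prod_univ_sum (fun _ : ZMod n => (Finset.univ : Finset Bool))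
      (fun _ b => if b then ρ else 1 - ρ)
  rw [Fintype.piFinset_univ] at h
  simp only [w]
  rw [← h]
  simp

lemma nuExp_nonneg (h0 : 0 ≤ ρ) (h1 : ρ ≤ 1) {φ : (ZMod n → Bool) → ℝ}
    (hφ : ∀ η, 0 ≤ φ η) : 0 ≤ nuExp n ρ φ :=
  Finset.sum_nonneg fun η _ => mul_nonneg (w_nonneg h0 h1 η) (hφ η)

lemma nuExp_mono (h0 : 0 ≤ ρ) (h1 : ρ ≤ 1) {φ ψ : (ZMod n → Bool) → ℝ}
    (h : ∀ η, φ η ≤ ψ η) : nuExp n ρ φ ≤ nuExp n ρ ψ :=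
  Finset.sum_le_sum fun η _ => mul_le_mul_of_nonneg_left (h η) (w_nonneg h0 h1 η)

lemma nuExp_const (c : ℝ) : nuExp n ρ (fun _ => c) = c := by
  rw [nuExp_def, ← Finset.sum_mul, sum_w, one_mul]

lemma nuExp_add (φ ψ : (ZMod n → Bool) → ℝ) :
    nuExp n ρ (fun η => φ η + ψ η) = nuExp n ρ φ + nuExp n ρ ψ := by
  simp [nuExp_def, mul_add, Finset.sum_add_distrib]

lemma nuExp_smul (c : ℝ) (φ : (ZMod n → Bool) → ℝ) :
    nuExp n ρ (fun η => c * φ η) = c * nuExp n ρ φ := by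
  simp only [nuExp_def, Finset.mul_sum]
  exact Finset.sum_congr rfl fun _ _ => by ring

lemma nuExp_sum {ι : Type*} (s : Finset ι) (φ : ι → (ZMod n → Bool) → ℝ) :
    nuExp n ρ (fun η => ∑ i ∈ s, φ i η) = ∑ i ∈ s, nuExp n ρ (φ i) := by
  simp [nuExp_def, Finset.mul_sum]
  rw [Finset.sum_comm]

lemma abs_nuExp_le (h0 : 0 ≤ ρ) (h1 : ρ ≤ 1) (φ : (ZMod n → Bool) → ℝ) :
    |nuExp n ρ φ| ≤ nuExp n ρ (fun η => |φ η|) := by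
  rw [nuExp_def, nuExp_def]
  refine (Finset.abs_sum_le_sum_abs _ _).trans (Finset.sum_le_sum fun η _ => ?_)
  rw [abs_mul, abs_of_nonneg (w_nonneg h0 h1 η)]

/-- invariance of the product measure under permutations of sites -/
lemma nuExp_perm (π : ZMod n ≃ ZMod n) (φ : (ZMod n → Bool) → ℝ) :
    nuExp n ρ (fun η => φ (η ∘ π)) = nuExp n ρ φ := by
  rw [nuExp_def, nuExp_def]
  refine Fintype.sum_equiv (Equiv.arrowCongr π.symm (Equiv.refl Bool))
    _ _ fun η => ?_
  have h1 : ((Equiv.arrowCongr π.symm (Equiv.refl Bool)) η) = η ∘ π := by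
    ext z; simp [Equiv.arrowCongr]
  rw [h1]
  congr 1
  rw [w.eq_def, w.eq_def]
  exact (Equiv.prod_comp π (fun x => if (η x : Bool) then ρ else 1 - ρ)).symm

/-- L²(ν_ρ) norm -/
def Nrm (n : ℕ) [NeZero n] (ρ : ℝ) (g : (ZMod n → Bool) → ℝ) : ℝ :=
  Real.sqrt (nuExp n ρ (fun η => g η ^ 2))

lemma Nrm_nonneg (g : (ZMod n → Bool) → ℝ) : 0 ≤ Nrm n ρ g := Real.sqrt_nonneg _

lemma nuExp_sq_nonneg (h0 : 0 ≤ ρ) (h1 : ρ ≤ 1) (g : (ZMod n → Bool) → ℝ) :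
    0 ≤ nuExp n ρ (fun η => g η ^ 2) :=
  nuExp_nonneg h0 h1 fun η => sq_nonneg _

lemma Nrm_sq (h0 : 0 ≤ ρ) (h1 : ρ ≤ 1) (g : (ZMod n → Bool) → ℝ) :
    Nrm n ρ g ^ 2 = nuExp n ρ (fun η => g η ^ 2) :=
  Real.sq_sqrt (nuExp_sq_nonneg h0 h1 g)

lemma Nrm_abs (g : (ZMod n → Bool) → ℝ) :
    Nrm n ρ (fun η => |g η|) = Nrm n ρ g := by
  unfold Nrm; congr 1; refine Finset.sum_congr rfl fun η _ => ?_
  simp [sq_abs]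

/-- Cauchy–Schwarz -/
lemma nuExp_mul_le (h0 : 0 ≤ ρ) (h1 : ρ ≤ 1) (φ ψ : (ZMod n → Bool) → ℝ) :
    nuExp n ρ (fun η => φ η * ψ η) ≤ Nrm n ρ φ * Nrm n ρ ψ := by
  rw [nuExp_def]
  have key : ∀ η : ZMod n → Bool, w n ρ η * (φ η * ψ η)
      = (Real.sqrt (w n ρ η) * φ η) * (Real.sqrt (w n ρ η) * ψ η) := by
    intro η
    have : (Real.sqrt (w n ρ η) * φ η) * (Real.sqrt (w n ρ η) * ψ η)
        = (Real.sqrt (w n ρ η) * Real.sqrt (w n ρ η)) * (φ η * ψ η) := by ring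
    rw [this, Real.mul_self_sqrt (w_nonneg h0 h1 η)]
  rw [Finset.sum_congr rfl fun η _ => key η]
  refine le_trans (Real.sum_mul_le_sqrt_mul_sqrt _ _ _) (le_of_eq ?_)
  have hs : ∀ ξ : (ZMod n → Bool) → ℝ,
      (∑ η : ZMod n → Bool, (Real.sqrt (w n ρ η) * ξ η) ^ 2)
        = nuExp n ρ (fun η => ξ η ^ 2) := by
    intro ξ
    rw [nuExp_def]
    refine Finset.sum_congr rfl fun η _ => ?_
    rw [mul_pow, Real.sq_sqrt (w_nonneg h0 h1 η)]
  rw [hs, hs]; rfl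

/-- Minkowski inequality -/
lemma Nrm_add_le (h0 : 0 ≤ ρ) (h1 : ρ ≤ 1) (φ ψ : (ZMod n → Bool) → ℝ) :
    Nrm n ρ (fun η => φ η + ψ η) ≤ Nrm n ρ φ + Nrm n ρ ψ := by
  have hexp : nuExp n ρ (fun η => (φ η + ψ η) ^ 2)
      ≤ (Nrm n ρ φ + Nrm n ρ ψ) ^ 2 := by
    have h2 : nuExp n ρ (fun η => (φ η + ψ η) ^ 2)
        = nuExp n ρ (fun η => φ η ^ 2) + (2 * nuExp n ρ (fun η => φ η * ψ η)
          + nuExp n ρ (fun η => ψ η ^ 2)) := by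
      rw [← nuExp_smul, ← nuExp_add, ← nuExp_add]
      congr 1; funext η; ring
    rw [h2]
    have hcs := nuExp_mul_le h0 h1 φ ψ
    have e1 := Nrm_sq h0 h1 φ
    have e2 := Nrm_sq h0 h1 ψ
    nlinarith [Nrm_nonneg (n := n) (ρ := ρ) φ, Nrm_nonneg (n := n) (ρ := ρ) ψ]
  have := Real.sqrt_le_sqrt hexp
  have hnn : 0 ≤ Nrm n ρ φ + Nrm n ρ ψ :=
    add_nonneg (Nrm_nonneg φ) (Nrm_nonneg ψ)
  rwa [Real.sqrt_sq hnn] at this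

lemma Nrm_comp_perm (π : ZMod n ≃ ZMod n) (g : (ZMod n → Bool) → ℝ) :
    Nrm n ρ (fun η => g (η ∘ π)) = Nrm n ρ g := by
  unfold Nrm
  rw [nuExp_perm π (fun η => g η ^ 2)]

lemma Nrm_abs_comp (π : ZMod n ≃ ZMod n) (g : (ZMod n → Bool) → ℝ) :
    Nrm n ρ (fun η => |g (η ∘ π)|) = Nrm n ρ g := by
  have h' : Nrm n ρ (fun η => |g (η ∘ ⇑π)|) = Nrm n ρ (fun ζ => |g ζ|) :=
    Nrm_comp_perm π (fun ζ => |g ζ|)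
  rw [h', Nrm_abs]

lemma Nrm_comp (π : ZMod n ≃ ZMod n) (g : (ZMod n → Bool) → ℝ) :
    Nrm n ρ (fun η => g (η ∘ π)) = Nrm n ρ g := Nrm_comp_perm π g

omit [NeZero n] in
lemma swap_conj {a b c : ZMod n} (hab : a ≠ b) (hac : a ≠ c) (hbc : b ≠ c) (z : ZMod n) :
    Equiv.swap b c (Equiv.swap a b (Equiv.swap b c z)) = Equiv.swap a c z := by
  simp only [Equiv.swap_apply_def]
  split_ifs <;> simp_all

lemma Nrm_zero : Nrm n ρ (fun _ => 0) = 0 := by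
  unfold Nrm
  have : (fun _ : ZMod n → Bool => (0:ℝ) ^ 2) = fun _ => (0:ℝ) := by funext _; norm_num
  rw [this, nuExp_const, Real.sqrt_zero]

omit [NeZero n] in
lemma zmod_cast_ne {u v : ℤ} (h1 : u < v) (h2 : v - u < (n : ℤ)) :
    ((u : ZMod n) ≠ (v : ZMod n)) := by
  intro h
  have hz : ((v - u : ℤ) : ZMod n) = 0 := by push_cast; rw [← h]; ring
  have hdvd : (n : ℤ) ∣ (v - u) := (ZMod.intCast_zmod_eq_zero_iff_dvd _ _).mp hz
  have := Int.le_of_dvd (by omega) hdvd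
  omega

lemma Nrm_swap_step (h0 : 0 ≤ ρ) (h1 : ρ ≤ 1) (g : (ZMod n → Bool) → ℝ)
    {a b c : ZMod n} (hab : a ≠ b) (hac : a ≠ c) (hbc : b ≠ c) :
    Nrm n ρ (fun η => g (η ∘ Equiv.swap a c) - g η)
      ≤ Nrm n ρ (fun η => g (η ∘ Equiv.swap a b) - g η)
        + 2 * Nrm n ρ (fun η => g (η ∘ Equiv.swap b c) - g η) := by
  set s := Equiv.swap b c with hs
  set σ := Equiv.swap a b with hσ
  have hcomp : ∀ η : ZMod n → Bool, η ∘ ⇑(Equiv.swap a c) = ((η ∘ ⇑s) ∘ ⇑σ) ∘ ⇑s := by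
    intro η; funext z
    simp only [Function.comp_apply]
    rw [← swap_conj hab hac hbc z]
  have hsplit : (fun η => g (η ∘ ⇑(Equiv.swap a c)) - g η)
      = fun η : ZMod n → Bool =>
          ((g (((η ∘ ⇑s) ∘ ⇑σ) ∘ ⇑s) - g ((η ∘ ⇑s) ∘ ⇑σ))
            + (g ((η ∘ ⇑s) ∘ ⇑σ) - g (η ∘ ⇑s))) + (g (η ∘ ⇑s) - g η) := by
    funext η; rw [hcomp η]; ring
  rw [hsplit]
  have step1 := Nrm_add_le h0 h1
    (fun η : ZMod n → Bool =>
      (g (((η ∘ ⇑s) ∘ ⇑σ) ∘ ⇑s) - g ((η ∘ ⇑s) ∘ ⇑σ))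
        + (g ((η ∘ ⇑s) ∘ ⇑σ) - g (η ∘ ⇑s)))
    (fun η => g (η ∘ ⇑s) - g η)
  have step2 := Nrm_add_le h0 h1
    (fun η : ZMod n → Bool => g (((η ∘ ⇑s) ∘ ⇑σ) ∘ ⇑s) - g ((η ∘ ⇑s) ∘ ⇑σ))
    (fun η : ZMod n → Bool => g ((η ∘ ⇑s) ∘ ⇑σ) - g (η ∘ ⇑s))
  have id1 : Nrm n ρ (fun η : ZMod n → Bool =>
        g (((η ∘ ⇑s) ∘ ⇑σ) ∘ ⇑s) - g ((η ∘ ⇑s) ∘ ⇑σ))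
      = Nrm n ρ (fun η => g (η ∘ ⇑s) - g η) := by
    exact Nrm_comp_perm (ρ := ρ) (σ.trans s) (fun ζ => g (ζ ∘ ⇑s) - g ζ)
  have id2 : Nrm n ρ (fun η : ZMod n → Bool => g ((η ∘ ⇑s) ∘ ⇑σ) - g (η ∘ ⇑s))
      = Nrm n ρ (fun η => g (η ∘ ⇑σ) - g η) := by
    exact Nrm_comp_perm (ρ := ρ) s (fun ζ => g (ζ ∘ ⇑σ) - g ζ)
  linarith [step1, step2, id1, id2]

lemma path_bound (h0 : 0 ≤ ρ) (h1 : ρ ≤ 1) (g : (ZMod n → Bool) → ℝ) (p : ℤ) :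
    ∀ k : ℕ, k < n →
    Nrm n ρ (fun η => g (η ∘ Equiv.swap ((p : ZMod n)) (((p + k : ℤ) : ZMod n))) - g η)
      ≤ 2 * ∑ j ∈ Finset.range k,
          Nrm n ρ (fun η =>
            g (η ∘ Equiv.swap (((p + j : ℤ) : ZMod n)) (((p + j + 1 : ℤ) : ZMod n))) - g η) := by
  intro k
  induction k with
  | zero =>
    intro _
    have : ((p + (0:ℕ) : ℤ) : ZMod n) = (p : ZMod n) := by norm_num
    rw [this, Finset.range_zero, Finset.sum_empty, Equiv.swap_self]
    have hfun : (fun η : ZMod n → Bool => g (η ∘ ⇑(Equiv.refl (ZMod n))) - g η)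
        = fun _ => 0 := by
      funext η; simp
    rw [hfun, Nrm_zero]
    norm_num
  | succ k ih =>
    intro hk
    rcases Nat.eq_zero_or_pos k with hk0 | hkpos
    · subst hk0
      rw [Finset.sum_range_one]
      have e1 : ((p + (1:ℕ) : ℤ) : ZMod n) = ((p + (0:ℕ) + 1 : ℤ) : ZMod n) := by norm_num
      have e2 : ((p + (0:ℕ) : ℤ) : ZMod n) = (p : ZMod n) := by norm_num
      rw [e1, ← e2]
      have hnn := Nrm_nonneg (n := n) (ρ := ρ) (fun η =>
        g (η ∘ Equiv.swap (((p + (0:ℕ) : ℤ) : ZMod n)) (((p + (0:ℕ) + 1 : ℤ) : ZMod n))) - g η)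
      linarith
    · have hkn : k < n := Nat.lt_of_succ_lt hk
      have hab : (p : ZMod n) ≠ (((p + k : ℤ) : ZMod n)) :=
        zmod_cast_ne (by omega) (by push_cast; omega)
      have hac : (p : ZMod n) ≠ (((p + (k+1:ℕ) : ℤ) : ZMod n)) :=
        zmod_cast_ne (by push_cast; omega) (by push_cast; omega)
      have hbc : (((p + k : ℤ) : ZMod n)) ≠ (((p + (k+1:ℕ) : ℤ) : ZMod n)) :=
        zmod_cast_ne (by push_cast; omega) (by push_cast; omega)
      have hstep := Nrm_swap_step h0 h1 g hab hac hbc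
      have hsum : (((p + (k:ℕ) + 1 : ℤ) : ZMod n)) = (((p + ((k:ℕ)+1:ℕ) : ℤ) : ZMod n)) :=
        congrArg (Int.cast : ℤ → ZMod n) (by push_cast; ring)
      rw [Finset.sum_range_succ, hsum]
      have := ih hkn
      linarith [Nrm_nonneg (n := n) (ρ := ρ) (fun η =>
        g (η ∘ Equiv.swap (((p + k : ℤ) : ZMod n)) (((p + (k+1:ℕ) : ℤ) : ZMod n))) - g η)]

/-- Dirichlet-form-like quantity -/
def Dform (n : ℕ) [NeZero n] (ρ : ℝ) (g : (ZMod n → Bool) → ℝ) : ℝ :=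
  ∑ x : ZMod n, nuExp n ρ (fun η => (g (η ∘ Equiv.swap x (x + 1)) - g η) ^ 2)

lemma Dform_nonneg (h0 : 0 ≤ ρ) (h1 : ρ ≤ 1) (g : (ZMod n → Bool) → ℝ) :
    0 ≤ Dform n ρ g :=
  Finset.sum_nonneg fun x _ => nuExp_nonneg h0 h1 fun η => sq_nonneg _

omit [NeZero n] in
lemma swapConf_eq (η : ZMod n → Bool) (x y : ZMod n) :
    swapConf η x y = η ∘ ⇑(Equiv.swap x y) := by
  funext z
  simp only [swapConf, Function.comp_apply, Equiv.swap_apply_def]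
  split_ifs <;> rfl

omit [NeZero n] in
lemma shiftConf_eq (η : ZMod n → Bool) (z : ZMod n) :
    shiftConf η z = η ∘ ⇑(Equiv.addRight z) := by
  funext x
  simp [shiftConf, Equiv.coe_addRight]

omit [NeZero n] in
lemma mul_le_abs {c x : ℝ} (hc0 : 0 ≤ c) (hc1 : c ≤ 1) : c * x ≤ |x| := by
  rcases le_or_gt 0 x with h | h
  · rw [abs_of_nonneg h]; nlinarith
  · rw [abs_of_neg h]; nlinarith

lemma bond_term (h0 : 0 ≤ ρ) (h1 : ρ ≤ 1) (g : (ZMod n → Bool) → ℝ) (x : ZMod n) :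
    nuExp n ρ (fun η => g η * (g (η ∘ ⇑(Equiv.swap x (x+1))) - g η))
      = -(1/2) * nuExp n ρ (fun η => (g (η ∘ ⇑(Equiv.swap x (x+1))) - g η) ^ 2) := by
  set s := Equiv.swap x (x+1)
  have hinv : nuExp n ρ (fun η => g (η ∘ ⇑s) ^ 2) = nuExp n ρ (fun η => g η ^ 2) :=
    nuExp_perm s (fun η => g η ^ 2)
  have key : (fun η : ZMod n → Bool => g η * (g (η ∘ ⇑s) - g η))
      = fun η => (-(1/2)) * ((g (η ∘ ⇑s) - g η) ^ 2)
          + ((1/2) * (g (η ∘ ⇑s) ^ 2) + (-(1/2)) * (g η ^ 2)) := by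
    funext η; ring
  rw [key, nuExp_add, nuExp_add, nuExp_smul, nuExp_smul, nuExp_smul, hinv]
  ring

lemma asym_bound (h0 : 0 ≤ ρ) (h1 : ρ ≤ 1)
    (cp cm : (ℤ → Bool) → ℝ)
    (hcp : ∀ ξ, cp ξ ∈ Set.Icc (0:ℝ) 1) (hcm : ∀ ξ, cm ξ ∈ Set.Icc (0:ℝ) 1)
    (g : (ZMod n → Bool) → ℝ) (hg : nuExp n ρ (fun η => g η ^ 2) = 1) :
    nuExp n ρ (fun η => g η * (liftFn cp η * (g (shiftConf η 1) - g η)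
      + liftFn cm η * (g (shiftConf η (-1)) - g η))) ≤ 2 := by
  have hNg : Nrm n ρ g = 1 := by
    unfold Nrm; rw [hg, Real.sqrt_one]
  have hpt : ∀ η : ZMod n → Bool,
      g η * (liftFn cp η * (g (shiftConf η 1) - g η)
        + liftFn cm η * (g (shiftConf η (-1)) - g η))
      ≤ |g η| * |g (η ∘ ⇑(Equiv.addRight (1 : ZMod n)))|
        + |g η| * |g (η ∘ ⇑(Equiv.addRight (-1 : ZMod n)))| := by
    intro η
    rw [shiftConf_eq, shiftConf_eq]
    have h1p := hcp (fun k => η (k : ZMod n))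
    have h1m := hcm (fun k => η (k : ZMod n))
    simp only [Set.mem_Icc] at h1p h1m
    have e1 : g η * (liftFn cp η * (g (η ∘ ⇑(Equiv.addRight (1 : ZMod n))) - g η)
        + liftFn cm η * (g (η ∘ ⇑(Equiv.addRight (-1 : ZMod n))) - g η))
      = liftFn cp η * (g η * g (η ∘ ⇑(Equiv.addRight (1 : ZMod n))))
        + liftFn cm η * (g η * g (η ∘ ⇑(Equiv.addRight (-1 : ZMod n))))
        - (liftFn cp η + liftFn cm η) * g η ^ 2 := by ring
    rw [e1]
    have b1 : liftFn cp η * (g η * g (η ∘ ⇑(Equiv.addRight (1 : ZMod n))))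
        ≤ |g η| * |g (η ∘ ⇑(Equiv.addRight (1 : ZMod n)))| := by
      refine le_trans (mul_le_abs h1p.1 h1p.2) (le_of_eq (abs_mul _ _))
    have b2 : liftFn cm η * (g η * g (η ∘ ⇑(Equiv.addRight (-1 : ZMod n))))
        ≤ |g η| * |g (η ∘ ⇑(Equiv.addRight (-1 : ZMod n)))| := by
      refine le_trans (mul_le_abs h1m.1 h1m.2) (le_of_eq (abs_mul _ _))
    have hlp1 : (0:ℝ) ≤ liftFn cp η := h1p.1
    have hlm1 : (0:ℝ) ≤ liftFn cm η := h1m.1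
    have hnn := mul_nonneg (add_nonneg hlp1 hlm1) (sq_nonneg (g η))
    linarith [b1, b2]
  refine le_trans (nuExp_mono h0 h1 hpt) ?_
  rw [nuExp_add]
  have c1 : nuExp n ρ (fun η => |g η| * |g (η ∘ ⇑(Equiv.addRight (1 : ZMod n)))|) ≤ 1 := by
    refine le_trans (nuExp_mul_le h0 h1 _ _) ?_
    rw [Nrm_abs, Nrm_abs_comp (Equiv.addRight (1 : ZMod n)) g, hNg]; norm_num
  have c2 : nuExp n ρ (fun η => |g η| * |g (η ∘ ⇑(Equiv.addRight (-1 : ZMod n)))|) ≤ 1 := by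
    refine le_trans (nuExp_mul_le h0 h1 _ _) ?_
    rw [Nrm_abs, Nrm_abs_comp (Equiv.addRight (-1 : ZMod n)) g, hNg]; norm_num
  linarith

lemma gen_bound (h0 : 0 ≤ ρ) (h1 : ρ ≤ 1)
    (cp cm : (ℤ → Bool) → ℝ)
    (hcp : ∀ ξ, cp ξ ∈ Set.Icc (0:ℝ) 1) (hcm : ∀ ξ, cm ξ ∈ Set.Icc (0:ℝ) 1)
    (g : (ZMod n → Bool) → ℝ) (hg : nuExp n ρ (fun η => g η ^ 2) = 1) :
    nuExp n ρ (fun η => g η * Lgen n cp cm g η)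
      ≤ -((n:ℝ)^2 / 2) * Dform n ρ g + 2 * n := by
  have hsplit : (fun η : ZMod n → Bool => g η * Lgen n cp cm g η)
      = fun η => (n:ℝ)^2 * (∑ x : ZMod n, g η * (g (η ∘ ⇑(Equiv.swap x (x+1))) - g η))
          + (n:ℝ) * (g η * (liftFn cp η * (g (shiftConf η 1) - g η)
            + liftFn cm η * (g (shiftConf η (-1)) - g η))) := by
    funext η
    unfold Lgen
    simp_rw [swapConf_eq]
    rw [mul_add, mul_left_comm (g η) ((n:ℝ)^2), mul_left_comm (g η) ((n:ℝ)), Finset.mul_sum]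
  rw [hsplit, nuExp_add, nuExp_smul, nuExp_smul]
  have hsym : nuExp n ρ (fun η => ∑ x : ZMod n,
        g η * (g (η ∘ ⇑(Equiv.swap x (x+1))) - g η))
      = -(1/2) * Dform n ρ g := by
    rw [nuExp_sum, Dform, Finset.mul_sum]
    exact Finset.sum_congr rfl fun x _ => bond_term h0 h1 g x
  rw [hsym]
  have hasym := asym_bound h0 h1 cp cm hcp hcm g hg
  have hn : (0:ℝ) ≤ (n:ℝ) := Nat.cast_nonneg n
  nlinarith

/-! ### block averages -/

def cc (ℓ d x : ℕ) : ℝ := 1/(d:ℝ) - (if x ≤ ℓ then 1/(ℓ:ℝ) else 0)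

def ee (n : ℕ) [NeZero n] (x : ℕ) (η : ZMod n → Bool) : ℝ :=
  if η ((x:ℤ) : ZMod n) then 1 else 0

lemma ee_mem (x : ℕ) (η : ZMod n → Bool) : 0 ≤ ee n x η ∧ ee n x η ≤ 1 := by
  unfold ee; split <;> norm_num

lemma sum_ite_one {ℓ d : ℕ} (hl : 1 ≤ ℓ) (hld : ℓ ≤ d) :
    ∑ x ∈ Finset.Icc 1 d, (if x ≤ ℓ then 1/(ℓ:ℝ) else 0) = 1 := by
  rw [← Finset.sum_subset (Finset.Icc_subset_Icc_right hld)]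
  · rw [Finset.sum_congr rfl (fun x hx => if_pos (Finset.mem_Icc.mp hx).2),
      Finset.sum_const, Nat.card_Icc]
    have : (ℓ:ℝ) ≠ 0 := Nat.cast_ne_zero.mpr (by omega)
    simp only [Nat.add_sub_cancel, nsmul_eq_mul]
    field_simp
  · intro x hx hnx
    rw [if_neg]
    intro hxl
    exact hnx (Finset.mem_Icc.mpr ⟨(Finset.mem_Icc.mp hx).1, hxl⟩)

lemma sum_const_one {d : ℕ} (hd : 1 ≤ d) :
    ∑ _x ∈ Finset.Icc 1 d, (1/(d:ℝ)) = 1 := by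
  rw [Finset.sum_const, Nat.card_Icc]
  have : (d:ℝ) ≠ 0 := Nat.cast_ne_zero.mpr (by omega)
  simp only [Nat.add_sub_cancel, nsmul_eq_mul]
  field_simp

lemma sum_cc {ℓ d : ℕ} (hl : 1 ≤ ℓ) (hld : ℓ ≤ d) :
    ∑ x ∈ Finset.Icc 1 d, cc ℓ d x = 0 := by
  unfold cc
  rw [Finset.sum_sub_distrib, sum_ite_one hl hld, sum_const_one (le_trans hl hld)]
  ring

lemma sum_abs_cc {ℓ d : ℕ} (hl : 1 ≤ ℓ) (hld : ℓ ≤ d) :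
    ∑ x ∈ Finset.Icc 1 d, |cc ℓ d x| ≤ 2 := by
  have hpt : ∀ x ∈ Finset.Icc 1 d, |cc ℓ d x|
      ≤ 1/(d:ℝ) + (if x ≤ ℓ then 1/(ℓ:ℝ) else 0) := by
    intro x _
    unfold cc
    refine le_trans (abs_sub _ _) ?_
    have h1 : |1/(d:ℝ)| = 1/(d:ℝ) := abs_of_nonneg (by positivity)
    have h2 : |if x ≤ ℓ then 1/(ℓ:ℝ) else 0| = (if x ≤ ℓ then 1/(ℓ:ℝ) else 0) := by
      apply abs_of_nonneg; split <;> positivity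
    rw [h1, h2]
  refine le_trans (Finset.sum_le_sum hpt) ?_
  rw [Finset.sum_add_distrib, sum_ite_one hl hld, sum_const_one (le_trans hl hld)]
  norm_num

lemma sum_sq_cc {ℓ d : ℕ} (hl : 1 ≤ ℓ) (hld : ℓ ≤ d) :
    ∑ x ∈ Finset.Icc 1 d, (cc ℓ d x)^2 ≤ 2/(ℓ:ℝ) := by
  have hl0 : (0:ℝ) < (ℓ:ℝ) := by exact_mod_cast hl
  have hd0 : (0:ℝ) < (d:ℝ) := by exact_mod_cast (le_trans hl hld)
  have hinv : 1/(d:ℝ) ≤ 1/(ℓ:ℝ) := by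
    apply one_div_le_one_div_of_le hl0
    exact_mod_cast hld
  have hpt : ∀ x ∈ Finset.Icc 1 d, (cc ℓ d x)^2
      ≤ (1/(ℓ:ℝ)) * (if x ≤ ℓ then 1/(ℓ:ℝ) else 0) + (1/(d:ℝ)) * (1/(d:ℝ)) := by
    intro x _
    unfold cc
    split
    · have h1 : (0:ℝ) ≤ 1/(d:ℝ) := by positivity
      have h2 : (0:ℝ) ≤ 1/(ℓ:ℝ) := by positivity
      nlinarith [mul_nonneg h1 h2]
    · nlinarith [sq_nonneg (1/(ℓ:ℝ))]
  refine le_trans (Finset.sum_le_sum hpt) ?_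
  rw [Finset.sum_add_distrib, ← Finset.mul_sum, sum_ite_one hl hld]
  have : ∑ _x ∈ Finset.Icc 1 d, (1/(d:ℝ)) * (1/(d:ℝ))
      = (1/(d:ℝ)) * ∑ _x ∈ Finset.Icc 1 d, (1/(d:ℝ)) := by
    rw [Finset.mul_sum]
  rw [this, sum_const_one (le_trans hl hld)]
  rw [mul_one, mul_one]
  have : 1/(d:ℝ) ≤ 1/(ℓ:ℝ) := hinv
  rw [div_eq_mul_one_div 2 (ℓ:ℝ)]
  linarith

lemma blockAvg_eq (ℓ : ℕ) (η : ZMod n → Bool) :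
    blockAvg n ℓ η = ∑ x ∈ Finset.Icc 1 ℓ, (1/(ℓ:ℝ)) * ee n x η := by
  rw [blockAvg, Finset.mul_sum]
  rfl

lemma blockAvg_sub {ℓ d : ℕ} (hl : 1 ≤ ℓ) (hld : ℓ ≤ d) (η : ZMod n → Bool) :
    blockAvg n d η - blockAvg n ℓ η = ∑ x ∈ Finset.Icc 1 d, cc ℓ d x * ee n x η := by
  rw [blockAvg_eq, blockAvg_eq]
  have h2 : ∑ x ∈ Finset.Icc 1 ℓ, (1/(ℓ:ℝ)) * ee n x η
      = ∑ x ∈ Finset.Icc 1 d, (if x ≤ ℓ then 1/(ℓ:ℝ) else 0) * ee n x η := by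
    rw [← Finset.sum_subset (Finset.Icc_subset_Icc_right hld)]
    · exact Finset.sum_congr rfl fun x hx => by
        rw [if_pos (Finset.mem_Icc.mp hx).2]
    · intro x hx hnx
      rw [if_neg, zero_mul]
      intro hxl
      exact hnx (Finset.mem_Icc.mpr ⟨(Finset.mem_Icc.mp hx).1, hxl⟩)
  rw [h2, ← Finset.sum_sub_distrib]
  exact Finset.sum_congr rfl fun x _ => by unfold cc; ring

lemma blockAvg_mem {ℓ : ℕ} (hl : 1 ≤ ℓ) (η : ZMod n → Bool) :
    0 ≤ blockAvg n ℓ η ∧ blockAvg n ℓ η ≤ 1 := by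
  rw [blockAvg_eq]
  have hl0 : (0:ℝ) < (ℓ:ℝ) := by exact_mod_cast hl
  constructor
  · apply Finset.sum_nonneg
    intro x _
    exact mul_nonneg (by positivity) (ee_mem x η).1
  · have : ∑ x ∈ Finset.Icc 1 ℓ, (1/(ℓ:ℝ)) * ee n x η
        ≤ ∑ _x ∈ Finset.Icc 1 ℓ, (1/(ℓ:ℝ)) := by
      apply Finset.sum_le_sum
      intro x _
      have := (ee_mem (n := n) x η).2
      have h0 : (0:ℝ) ≤ 1/(ℓ:ℝ) := by positivity
      nlinarith
    refine le_trans this (le_of_eq (sum_const_one hl))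

/-! ### Lipschitz estimate for fbar -/

omit [NeZero n] in
lemma abs_prod_sub_prod {ι : Type*} (s : Finset ι) (a b : ι → ℝ)
    (ha : ∀ i ∈ s, 0 ≤ a i ∧ a i ≤ 1) (hb : ∀ i ∈ s, 0 ≤ b i ∧ b i ≤ 1) :
    |∏ i ∈ s, a i - ∏ i ∈ s, b i| ≤ ∑ i ∈ s, |a i - b i| := by
  classical
  induction s using Finset.cons_induction with
  | empty => simp
  | cons i s his ih =>
    rw [Finset.prod_cons, Finset.prod_cons, Finset.sum_cons]
    have hprod_a : |∏ j ∈ s, a j| ≤ 1 := by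
      rw [abs_of_nonneg (Finset.prod_nonneg fun j hj => (ha j (Finset.mem_cons_of_mem hj)).1)]
      exact Finset.prod_le_one (fun j hj => (ha j (Finset.mem_cons_of_mem hj)).1)
        (fun j hj => (ha j (Finset.mem_cons_of_mem hj)).2)
    have hbi : |b i| ≤ 1 := by
      rw [abs_of_nonneg (hb i (Finset.mem_cons_self i s)).1]
      exact (hb i (Finset.mem_cons_self i s)).2
    have ih' := ih (fun j hj => ha j (Finset.mem_cons_of_mem hj))
      (fun j hj => hb j (Finset.mem_cons_of_mem hj))
    have key : a i * ∏ j ∈ s, a j - b i * ∏ j ∈ s, b j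
        = (a i - b i) * ∏ j ∈ s, a j + b i * (∏ j ∈ s, a j - ∏ j ∈ s, b j) := by ring
    rw [key]
    refine le_trans (abs_add_le _ _) ?_
    rw [abs_mul, abs_mul]
    have t1 : |a i - b i| * |∏ j ∈ s, a j| ≤ |a i - b i| * 1 :=
      mul_le_mul_of_nonneg_left hprod_a (abs_nonneg _)
    have t2 : |b i| * |∏ j ∈ s, a j - ∏ j ∈ s, b j| ≤ 1 * ∑ i ∈ s, |a i - b i| := by
      apply mul_le_mul hbi ih' (abs_nonneg _) (by norm_num)
    rw [mul_one] at t1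
    rw [one_mul] at t2
    linarith

omit [NeZero n] in
lemma fbar_lip (m : ℕ) (f : (ℤ → Bool) → ℝ) :
    ∃ Lf : ℝ, 0 ≤ Lf ∧ ∀ θ θ' : ℝ, 0 ≤ θ → θ ≤ 1 → 0 ≤ θ' → θ' ≤ 1 →
      |fbar m f θ - fbar m f θ'| ≤ Lf * |θ - θ'| := by
  classical
  refine ⟨∑ ζ : Fin m → Bool,
    (m:ℝ) * |f (fun k => if h : 1 ≤ k ∧ k ≤ (m : ℤ) then ζ ⟨(k - 1).toNat, by omega⟩ else false)|,
    Finset.sum_nonneg fun ζ _ => by positivity, ?_⟩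
  intro θ θ' hθ0 hθ1 hθ'0 hθ'1
  unfold fbar
  rw [← Finset.sum_sub_distrib]
  refine le_trans (Finset.abs_sum_le_sum_abs _ _) ?_
  rw [Finset.sum_mul]
  refine Finset.sum_le_sum fun ζ _ => ?_
  rw [← sub_mul, abs_mul]
  have hprod : |(∏ j : Fin m, (if ζ j then θ else 1 - θ))
      - ∏ j : Fin m, (if ζ j then θ' else 1 - θ')| ≤ (m:ℝ) * |θ - θ'| := by
    refine le_trans (abs_prod_sub_prod Finset.univ _ _ ?_ ?_) ?_
    · intro j _; split <;> constructor <;> linarith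
    · intro j _; split <;> constructor <;> linarith
    · have hpt : ∀ j : Fin m,
          |(if ζ j then θ else 1 - θ) - (if ζ j then θ' else 1 - θ')| = |θ - θ'| := by
        intro j; split
        · rfl
        · rw [show (1 - θ) - (1 - θ') = -(θ - θ') by ring, abs_neg]
      rw [Finset.sum_congr rfl fun j _ => hpt j, Finset.sum_const, Finset.card_univ,
        Fintype.card_fin, nsmul_eq_mul]
  refine le_trans (mul_le_mul_of_nonneg_right hprod (abs_nonneg _)) (le_of_eq (by ring))

/-! ### swap bound via Dirichlet form -/

lemma nuExp_sub (φ ψ : (ZMod n → Bool) → ℝ) :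
    nuExp n ρ (fun η => φ η - ψ η) = nuExp n ρ φ - nuExp n ρ ψ := by
  simp [nuExp_def, mul_sub, Finset.sum_sub_distrib]

lemma Nrm_sub_swap (u v : (ZMod n → Bool) → ℝ) :
    Nrm n ρ (fun η => u η - v η) = Nrm n ρ (fun η => v η - u η) := by
  unfold Nrm
  congr 1
  refine Finset.sum_congr rfl fun η _ => ?_
  have : (u η - v η)^2 = (v η - u η)^2 := by ring
  simp only [this]

lemma bondNrm_sq (h0 : 0 ≤ ρ) (h1 : ρ ≤ 1) (g : (ZMod n → Bool) → ℝ) (z : ZMod n) :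
    (Nrm n ρ (fun η => g (η ∘ Equiv.swap z (z+1)) - g η))^2
      = nuExp n ρ (fun η => (g (η ∘ Equiv.swap z (z+1)) - g η)^2) :=
  Nrm_sq h0 h1 _

lemma swap_le_sum_bonds (h0 : 0 ≤ ρ) (h1 : ρ ≤ 1) (g : (ZMod n → Bool) → ℝ)
    {d : ℕ} (hdn : d ≤ n) (hd1 : 1 ≤ d)
    {y r : ℕ} (hy : y ∈ Finset.Icc 1 d) (hr : r ∈ Finset.Icc 1 d) :
    Nrm n ρ (fun η => g (η ∘ Equiv.swap (((y:ℤ) : ZMod n)) (((r:ℤ) : ZMod n))) - g η)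
      ≤ 2 * (Real.sqrt (d:ℝ) * Real.sqrt (Dform n ρ g)) := by
  rw [Finset.mem_Icc] at hy hr
  -- reduce to the ordered case via a helper
  have main : ∀ y r : ℕ, 1 ≤ y → y ≤ r → r ≤ d →
      Nrm n ρ (fun η => g (η ∘ Equiv.swap (((y:ℤ) : ZMod n)) (((r:ℤ) : ZMod n))) - g η)
        ≤ 2 * (Real.sqrt (d:ℝ) * Real.sqrt (Dform n ρ g)) := by
    intro y r hy1 hyr hrd
    set k : ℕ := r - y with hk
    have hkd : k ≤ d - 1 := by omega
    have hkn : k < n := by omega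
    have hcast : (((y:ℤ) + (k:ℕ) : ℤ) : ZMod n) = ((r : ℤ) : ZMod n) := by
      congr 1; omega
    have hpath := path_bound h0 h1 g (y:ℤ) k hkn
    rw [hcast] at hpath
    refine le_trans hpath ?_
    -- bound the sum of bond norms via Cauchy-Schwarz
    set B : ZMod n → ℝ := fun z => Nrm n ρ (fun η => g (η ∘ Equiv.swap z (z+1)) - g η)
      with hB
    have hterm : ∀ j : ℕ,
        Nrm n ρ (fun η =>
          g (η ∘ Equiv.swap ((((y:ℤ) + j : ℤ) : ZMod n)) ((((y:ℤ) + j + 1 : ℤ) : ZMod n))) - g η)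
        = B ((((y:ℤ) + j : ℤ) : ZMod n)) := by
      intro j
      have : ((((y:ℤ) + j + 1 : ℤ)) : ZMod n) = ((((y:ℤ) + j : ℤ)) : ZMod n) + 1 := by
        push_cast; ring
      rw [hB]; rw [this]
    rw [Finset.sum_congr rfl fun j _ => hterm j]
    have hBnonneg : ∀ z, 0 ≤ B z := fun z => Nrm_nonneg _
    have hCS : ∑ j ∈ Finset.range k, B ((((y:ℤ) + j : ℤ) : ZMod n))
        ≤ Real.sqrt (k:ℝ) * Real.sqrt (∑ j ∈ Finset.range k,
            (B ((((y:ℤ) + j : ℤ) : ZMod n)))^2) := by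
      have := Real.sum_mul_le_sqrt_mul_sqrt (Finset.range k)
        (fun _ => (1:ℝ)) (fun j => B ((((y:ℤ) + j : ℤ) : ZMod n)))
      simpa using this
    refine le_trans (by linarith [hCS] :
      2 * ∑ j ∈ Finset.range k, B ((((y:ℤ) + j : ℤ) : ZMod n))
        ≤ 2 * (Real.sqrt (k:ℝ) * Real.sqrt (∑ j ∈ Finset.range k,
            (B ((((y:ℤ) + j : ℤ) : ZMod n)))^2))) ?_
    have hsub : ∑ j ∈ Finset.range k, (B ((((y:ℤ) + j : ℤ) : ZMod n)))^2
        ≤ Dform n ρ g := by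
      have hinj : ∀ j ∈ Finset.range k, ∀ j' ∈ Finset.range k,
          (((y:ℤ) + j : ℤ) : ZMod n) = (((y:ℤ) + j' : ℤ) : ZMod n) → j = j' := by
        intro j hj j' hj' hjj'
        simp only [Finset.mem_range] at hj hj'
        by_contra hne
        rcases Nat.lt_or_ge j j' with hlt | hge
        · exact zmod_cast_ne (by omega) (by push_cast; omega) hjj'
        · have hlt' : j' < j := by omega
          exact zmod_cast_ne (by omega) (by push_cast; omega) hjj'.symm
      have himg : ∑ z ∈ (Finset.range k).image (fun j : ℕ => (((y:ℤ) + j : ℤ) : ZMod n)),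
            B z ^ 2 = ∑ j ∈ Finset.range k, B ((((y:ℤ) + j : ℤ) : ZMod n)) ^ 2 :=
        Finset.sum_image hinj
      rw [← himg]
      rw [Dform]
      have heq : ∀ z : ZMod n, (B z)^2
          = nuExp n ρ (fun η => (g (η ∘ Equiv.swap z (z+1)) - g η)^2) :=
        fun z => bondNrm_sq h0 h1 g z
      rw [Finset.sum_congr rfl fun z _ => heq z]
      refine Finset.sum_le_sum_of_subset_of_nonneg (Finset.subset_univ _) ?_
      intro z _ _
      exact nuExp_nonneg h0 h1 fun η => sq_nonneg _
    have h1' : Real.sqrt (∑ j ∈ Finset.range k,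
        (B ((((y:ℤ) + j : ℤ) : ZMod n)))^2) ≤ Real.sqrt (Dform n ρ g) :=
      Real.sqrt_le_sqrt hsub
    have h2' : Real.sqrt (k:ℝ) ≤ Real.sqrt (d:ℝ) := by
      apply Real.sqrt_le_sqrt
      exact_mod_cast (by omega : k ≤ d)
    have := mul_le_mul h2' h1' (Real.sqrt_nonneg _) (Real.sqrt_nonneg _)
    linarith
  rcases le_total y r with h | h
  · exact main y r hy.1 h hr.2
  · rw [Equiv.swap_comm]
    exact main r y hr.1 h hy.2

/-! ### the pair correlation function -/

def PP (n : ℕ) [NeZero n] (ρ : ℝ) (g : (ZMod n → Bool) → ℝ) (x y : ℕ) : ℝ :=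
  nuExp n ρ (fun η => ee n x η * ee n y η * g η ^ 2)

lemma PP_mem (h0 : 0 ≤ ρ) (h1 : ρ ≤ 1) (g : (ZMod n → Bool) → ℝ)
    (hg : nuExp n ρ (fun η => g η ^ 2) = 1) (x y : ℕ) :
    0 ≤ PP n ρ g x y ∧ PP n ρ g x y ≤ 1 := by
  constructor
  · exact nuExp_nonneg h0 h1 fun η =>
      mul_nonneg (mul_nonneg (ee_mem x η).1 (ee_mem y η).1) (sq_nonneg _)
  · rw [← hg]
    apply nuExp_mono h0 h1
    intro η
    have hx := ee_mem (n := n) x η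
    have hy := ee_mem (n := n) y η
    have h4 : ee n x η * ee n y η ≤ 1 := mul_le_one₀ hx.2 hy.1 hy.2
    have h5 := mul_le_mul_of_nonneg_right h4 (sq_nonneg (g η))
    linarith

lemma cast_ne_of_mem {d : ℕ} (hdn : d ≤ n) {u v : ℕ} (hu : u ∈ Finset.Icc 1 d)
    (hv : v ∈ Finset.Icc 1 d) (huv : u ≠ v) :
    ((u : ℤ) : ZMod n) ≠ ((v : ℤ) : ZMod n) := by
  rw [Finset.mem_Icc] at hu hv
  rcases Nat.lt_or_ge u v with h | h
  · exact zmod_cast_ne (by omega) (by push_cast; omega)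
  · exact (zmod_cast_ne (by omega) (by push_cast; omega)).symm

lemma PP_diff (h0 : 0 ≤ ρ) (h1 : ρ ≤ 1) (g : (ZMod n → Bool) → ℝ)
    (hg : nuExp n ρ (fun η => g η ^ 2) = 1)
    {d : ℕ} (hdn : d ≤ n) (hd1 : 1 ≤ d)
    {x y r : ℕ} (hx : x ∈ Finset.Icc 1 d) (hy : y ∈ Finset.Icc 1 d)
    (hr : r ∈ Finset.Icc 1 d) (hxy : x ≠ y) (hxr : x ≠ r) :
    |PP n ρ g x y - PP n ρ g x r|
      ≤ 4 * (Real.sqrt (d:ℝ) * Real.sqrt (Dform n ρ g)) := by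
  have hNg : Nrm n ρ g = 1 := by unfold Nrm; rw [hg, Real.sqrt_one]
  have hDnn : 0 ≤ Real.sqrt (d:ℝ) * Real.sqrt (Dform n ρ g) :=
    mul_nonneg (Real.sqrt_nonneg _) (Real.sqrt_nonneg _)
  rcases eq_or_ne y r with hyr | hyr
  · rw [hyr, sub_self, abs_zero]; linarith
  set σ := Equiv.swap (((y:ℤ) : ZMod n)) (((r:ℤ) : ZMod n)) with hσ
  have hxy' : ((x:ℤ) : ZMod n) ≠ ((y:ℤ) : ZMod n) := cast_ne_of_mem hdn hx hy hxy
  have hxr' : ((x:ℤ) : ZMod n) ≠ ((r:ℤ) : ZMod n) := cast_ne_of_mem hdn hx hr hxr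
  have hswap : PP n ρ g x r
      = nuExp n ρ (fun η => ee n x η * ee n y η * (g (η ∘ ⇑σ)) ^ 2) := by
    have hperm := nuExp_perm (ρ := ρ) σ (fun η => ee n x η * ee n r η * g η ^ 2)
    rw [PP, ← hperm]
    apply congrArg
    funext η
    show ee n x (η ∘ ⇑σ) * ee n r (η ∘ ⇑σ) * g (η ∘ ⇑σ) ^ 2
        = ee n x η * ee n y η * g (η ∘ ⇑σ) ^ 2
    have e1 : ee n x (η ∘ ⇑σ) = ee n x η := by
      unfold ee
      rw [Function.comp_apply, hσ, Equiv.swap_apply_of_ne_of_ne hxy' hxr']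
    have e2 : ee n r (η ∘ ⇑σ) = ee n y η := by
      unfold ee
      rw [Function.comp_apply, hσ, Equiv.swap_apply_right]
    rw [e1, e2]
  rw [hswap, PP, ← nuExp_sub]
  have hstep1 : |nuExp n ρ (fun η => ee n x η * ee n y η * g η ^ 2
      - ee n x η * ee n y η * (g (η ∘ ⇑σ)) ^ 2)|
      ≤ nuExp n ρ (fun η => |g η ^ 2 - (g (η ∘ ⇑σ)) ^ 2|) := by
    refine le_trans (abs_nuExp_le h0 h1 _) (nuExp_mono h0 h1 fun η => ?_)
    have : ee n x η * ee n y η * g η ^ 2 - ee n x η * ee n y η * (g (η ∘ ⇑σ)) ^ 2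
        = ee n x η * ee n y η * (g η ^ 2 - (g (η ∘ ⇑σ)) ^ 2) := by ring
    rw [this, abs_mul, abs_mul]
    have hex := ee_mem (n := n) x η
    have hey := ee_mem (n := n) y η
    have hax : |ee n x η| ≤ 1 := by rw [abs_of_nonneg hex.1]; exact hex.2
    have hay : |ee n y η| ≤ 1 := by rw [abs_of_nonneg hey.1]; exact hey.2
    have h3 := abs_nonneg (g η ^ 2 - (g (η ∘ ⇑σ)) ^ 2)
    have h4 : |ee n x η| * |ee n y η| ≤ 1 := mul_le_one₀ hax (abs_nonneg _) hay
    have h5 := mul_le_mul_of_nonneg_right h4 h3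
    linarith
  refine le_trans hstep1 ?_
  have hfact : (fun η : ZMod n → Bool => |g η ^ 2 - (g (η ∘ ⇑σ)) ^ 2|)
      = fun η => |g η - g (η ∘ ⇑σ)| * |g η + g (η ∘ ⇑σ)| := by
    funext η
    rw [← abs_mul]
    congr 1
    ring
  rw [hfact]
  refine le_trans (nuExp_mul_le h0 h1 _ _) ?_
  rw [Nrm_abs (g := fun η => g η - g (η ∘ ⇑σ)), Nrm_abs (g := fun η => g η + g (η ∘ ⇑σ))]
  have hplus : Nrm n ρ (fun η => g η + g (η ∘ ⇑σ)) ≤ 2 := by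
    refine le_trans (Nrm_add_le h0 h1 g (fun η => g (η ∘ ⇑σ))) ?_
    rw [Nrm_comp σ g, hNg]
    norm_num
  have hminus : Nrm n ρ (fun η => g η - g (η ∘ ⇑σ))
      ≤ 2 * (Real.sqrt (d:ℝ) * Real.sqrt (Dform n ρ g)) := by
    rw [Nrm_sub_swap]
    exact swap_le_sum_bonds h0 h1 g hdn hd1 hy hr
  have hm0 : 0 ≤ Nrm n ρ (fun η => g η - g (η ∘ ⇑σ)) := Nrm_nonneg _
  nlinarith

/-! ### the Q bound -/

lemma Q_bound (h0 : 0 ≤ ρ) (h1 : ρ ≤ 1) (g : (ZMod n → Bool) → ℝ)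
    (hg : nuExp n ρ (fun η => g η ^ 2) = 1)
    {ℓ d : ℕ} (hl : 1 ≤ ℓ) (hld : ℓ ≤ d) (hd2 : 2 ≤ d) (hdn : d ≤ n) :
    nuExp n ρ (fun η => (∑ x ∈ Finset.Icc 1 d, cc ℓ d x * ee n x η)^2 * g η ^ 2)
      ≤ 4/(ℓ:ℝ) + 16 * (Real.sqrt (d:ℝ) * Real.sqrt (Dform n ρ g)) := by
  classical
  set I := Finset.Icc 1 d with hI
  set K := Real.sqrt (d:ℝ) * Real.sqrt (Dform n ρ g) with hK
  have hK0 : 0 ≤ K := mul_nonneg (Real.sqrt_nonneg _) (Real.sqrt_nonneg _)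
  have hd1 : 1 ≤ d := le_trans hl hld
  -- expand the square
  have hpt : ∀ η : ZMod n → Bool,
      (∑ x ∈ I, cc ℓ d x * ee n x η)^2 * g η ^ 2
        = ∑ x ∈ I, ∑ y ∈ I, cc ℓ d x * (cc ℓ d y * (ee n x η * ee n y η * g η ^ 2)) := by
    intro η
    rw [sq, Finset.sum_mul_sum, Finset.sum_mul]
    refine Finset.sum_congr rfl fun x _ => ?_
    rw [Finset.sum_mul]
    exact Finset.sum_congr rfl fun y _ => by ring
  have hQ : nuExp n ρ (fun η => (∑ x ∈ I, cc ℓ d x * ee n x η)^2 * g η ^ 2)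
      = ∑ x ∈ I, ∑ y ∈ I, cc ℓ d x * (cc ℓ d y * PP n ρ g x y) := by
    rw [congrArg (nuExp n ρ) (funext hpt), nuExp_sum]
    refine Finset.sum_congr rfl fun x _ => ?_
    rw [nuExp_sum]
    refine Finset.sum_congr rfl fun y _ => ?_
    rw [nuExp_smul, nuExp_smul]
    rfl
  rw [hQ]
  -- reference site
  set rr : ℕ → ℕ := fun x => if x = 1 then 2 else 1 with hrr
  have hrmem : ∀ x, rr x ∈ I := by
    intro x
    rw [hI, Finset.mem_Icc, hrr]
    by_cases hx1 : x = 1 <;> simp [hx1] <;> omega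
  have hrne : ∀ x, x ≠ rr x := by
    intro x
    rw [hrr]
    by_cases hx1 : x = 1 <;> simp [hx1] <;> omega
  -- per-x bound
  have hSx : ∀ x ∈ I, |∑ y ∈ I, cc ℓ d y * PP n ρ g x y| ≤ 2*|cc ℓ d x| + 8*K := by
    intro x hx
    have hsplit : ∑ y ∈ I, cc ℓ d y * PP n ρ g x y
        = cc ℓ d x * PP n ρ g x x
          + (∑ y ∈ I.erase x, cc ℓ d y * (PP n ρ g x y - PP n ρ g x (rr x))
            + (∑ y ∈ I.erase x, cc ℓ d y) * PP n ρ g x (rr x)) := by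
      rw [← Finset.add_sum_erase I _ hx]
      congr 1
      rw [Finset.sum_mul, ← Finset.sum_add_distrib]
      exact Finset.sum_congr rfl fun y _ => by ring
    rw [hsplit]
    have hsum_erase : ∑ y ∈ I.erase x, cc ℓ d y = - cc ℓ d x := by
      rw [Finset.sum_erase_eq_sub hx, hI, sum_cc hl hld]
      ring
    have hPPxx := PP_mem h0 h1 g hg x x
    have hPPxr := PP_mem h0 h1 g hg x (rr x)
    have b1 : |cc ℓ d x * PP n ρ g x x| ≤ |cc ℓ d x| := by
      rw [abs_mul]
      have : |PP n ρ g x x| ≤ 1 := by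
        rw [abs_of_nonneg hPPxx.1]; exact hPPxx.2
      nlinarith [abs_nonneg (cc ℓ d x)]
    have b2 : |∑ y ∈ I.erase x, cc ℓ d y * (PP n ρ g x y - PP n ρ g x (rr x))| ≤ 8*K := by
      refine le_trans (Finset.abs_sum_le_sum_abs _ _) ?_
      have hterm : ∀ y ∈ I.erase x,
          |cc ℓ d y * (PP n ρ g x y - PP n ρ g x (rr x))| ≤ |cc ℓ d y| * (4*K) := by
        intro y hy
        rw [abs_mul]
        refine mul_le_mul_of_nonneg_left ?_ (abs_nonneg _)
        have hyI := Finset.mem_of_mem_erase hy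
        have hyx : x ≠ y := fun h => (Finset.ne_of_mem_erase hy) h.symm
        have := PP_diff h0 h1 g hg hdn hd1 hx hyI (hrmem x) hyx (hrne x)
        rw [hK]
        linarith
      refine le_trans (Finset.sum_le_sum hterm) ?_
      rw [← Finset.sum_mul]
      have hle2 : ∑ y ∈ I.erase x, |cc ℓ d y| ≤ 2 := by
        refine le_trans (Finset.sum_le_sum_of_subset_of_nonneg
          (Finset.erase_subset x I) fun y _ _ => abs_nonneg _) ?_
        rw [hI]; exact sum_abs_cc hl hld
      nlinarith
    have b3 : |(∑ y ∈ I.erase x, cc ℓ d y) * PP n ρ g x (rr x)| ≤ |cc ℓ d x| := by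
      rw [hsum_erase, abs_mul, abs_neg]
      have : |PP n ρ g x (rr x)| ≤ 1 := by
        rw [abs_of_nonneg hPPxr.1]; exact hPPxr.2
      nlinarith [abs_nonneg (cc ℓ d x)]
    have htri1 := abs_add_le (cc ℓ d x * PP n ρ g x x)
      (∑ y ∈ I.erase x, cc ℓ d y * (PP n ρ g x y - PP n ρ g x (rr x))
        + (∑ y ∈ I.erase x, cc ℓ d y) * PP n ρ g x (rr x))
    have htri2 := abs_add_le
      (∑ y ∈ I.erase x, cc ℓ d y * (PP n ρ g x y - PP n ρ g x (rr x)))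
      ((∑ y ∈ I.erase x, cc ℓ d y) * PP n ρ g x (rr x))
    linarith
  -- assemble
  have habs : |∑ x ∈ I, ∑ y ∈ I, cc ℓ d x * (cc ℓ d y * PP n ρ g x y)|
      ≤ ∑ x ∈ I, |cc ℓ d x| * (2*|cc ℓ d x| + 8*K) := by
    refine le_trans (Finset.abs_sum_le_sum_abs _ _) (Finset.sum_le_sum fun x hx => ?_)
    have : ∑ y ∈ I, cc ℓ d x * (cc ℓ d y * PP n ρ g x y)
        = cc ℓ d x * ∑ y ∈ I, cc ℓ d y * PP n ρ g x y := by
      rw [Finset.mul_sum]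
    rw [this, abs_mul]
    exact mul_le_mul_of_nonneg_left (hSx x hx) (abs_nonneg _)
  have hfinal : ∑ x ∈ I, |cc ℓ d x| * (2*|cc ℓ d x| + 8*K)
      ≤ 4/(ℓ:ℝ) + 16*K := by
    have hsplit2 : ∑ x ∈ I, |cc ℓ d x| * (2*|cc ℓ d x| + 8*K)
        = 2 * (∑ x ∈ I, (cc ℓ d x)^2) + 8*K * (∑ x ∈ I, |cc ℓ d x|) := by
      rw [Finset.mul_sum, Finset.mul_sum, ← Finset.sum_add_distrib]
      refine Finset.sum_congr rfl fun x _ => ?_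
      have : |cc ℓ d x|^2 = (cc ℓ d x)^2 := sq_abs _
      nlinarith [sq_abs (cc ℓ d x)]
    rw [hsplit2]
    have hs1 : ∑ x ∈ I, (cc ℓ d x)^2 ≤ 2/(ℓ:ℝ) := by rw [hI]; exact sum_sq_cc hl hld
    have hs2 : ∑ x ∈ I, |cc ℓ d x| ≤ 2 := by rw [hI]; exact sum_abs_cc hl hld
    have hs2' : 0 ≤ ∑ x ∈ I, |cc ℓ d x| := Finset.sum_nonneg fun x _ => abs_nonneg _
    have hprod := mul_le_mul_of_nonneg_left hs2 (by linarith : (0:ℝ) ≤ 8*K)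
    have h4 : (4:ℝ)/(ℓ:ℝ) = 2*(2/(ℓ:ℝ)) := by ring
    linarith
  calc ∑ x ∈ I, ∑ y ∈ I, cc ℓ d x * (cc ℓ d y * PP n ρ g x y)
      ≤ |∑ x ∈ I, ∑ y ∈ I, cc ℓ d x * (cc ℓ d y * PP n ρ g x y)| := le_abs_self _
    _ ≤ 4/(ℓ:ℝ) + 16*K := le_trans habs hfinal

/-! ### scalar facts -/

omit [NeZero n] in
lemma sqrt_add_le {a b : ℝ} (ha : 0 ≤ a) (hb : 0 ≤ b) :
    Real.sqrt (a + b) ≤ Real.sqrt a + Real.sqrt b := by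
  have h : a + b ≤ (Real.sqrt a + Real.sqrt b)^2 := by
    have h1 := Real.sq_sqrt ha
    have h2 := Real.sq_sqrt hb
    nlinarith [mul_nonneg (Real.sqrt_nonneg a) (Real.sqrt_nonneg b)]
  calc Real.sqrt (a + b) ≤ Real.sqrt ((Real.sqrt a + Real.sqrt b)^2) := Real.sqrt_le_sqrt h
    _ = Real.sqrt a + Real.sqrt b :=
        Real.sqrt_sq (add_nonneg (Real.sqrt_nonneg _) (Real.sqrt_nonneg _))

omit [NeZero n] in
lemma scalar_opt {a c t : ℝ} (ha : 1 ≤ a) (ht : 0 ≤ t) (hc : 8*a^4 ≤ c) :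
    a * t ≤ c * t^4 + 1/2 := by
  have ha0 : (0:ℝ) < a := by linarith
  rcases le_or_gt t (1/(2*a)) with h | h
  · have h1 : a * t ≤ a * (1/(2*a)) := mul_le_mul_of_nonneg_left h (by linarith)
    have h2 : a * (1/(2*a)) = 1/2 := by field_simp
    have hc0 : (0:ℝ) ≤ c := by nlinarith [pow_pos ha0 4]
    have h3 : 0 ≤ c * t^4 := mul_nonneg hc0 (by positivity)
    linarith
  · have ht0 : 0 < t := lt_trans (by positivity) h
    have h3 : (1/(2*a))^3 ≤ t^3 := pow_le_pow_left₀ (by positivity) h.le 3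
    have e : (1/(2*a))^3 = 1/(8*a^3) := by field_simp; ring
    rw [e] at h3
    have h5 : a ≤ 8*a^4 * t^3 := by
      have h4 := mul_le_mul_of_nonneg_left h3 (by positivity : (0:ℝ) ≤ 8*a^4)
      have e2 : 8*a^4 * (1/(8*a^3)) = a := by field_simp
      linarith [e2 ▸ h4]
    have h6 : a * t ≤ (8*a^4 * t^3) * t := mul_le_mul_of_nonneg_right h5 ht
    have h7 : (8*a^4 * t^3) * t = 8*a^4*t^4 := by ring
    have h8 : 8*a^4*t^4 ≤ c * t^4 := mul_le_mul_of_nonneg_right hc (by positivity)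
    linarith

/-! ### the main objective bound for fixed n, g -/

lemma objective_bound (h0 : 0 ≤ ρ) (h1 : ρ ≤ 1)
    (cp cm : (ℤ → Bool) → ℝ)
    (hcp : ∀ ξ, cp ξ ∈ Set.Icc (0:ℝ) 1) (hcm : ∀ ξ, cm ξ ∈ Set.Icc (0:ℝ) 1)
    (f : (ℤ → Bool) → ℝ) (m : ℕ)
    (γ : ℝ) (hγ : 0 < γ)
    (Lf : ℝ) (hLf0 : 0 ≤ Lf)
    (hLf : ∀ θ θ' : ℝ, 0 ≤ θ → θ ≤ 1 → 0 ≤ θ' → θ' ≤ 1 →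
      |fbar m f θ - fbar m f θ'| ≤ Lf * |θ - θ'|)
    {ℓ d : ℕ} (hl : 1 ≤ ℓ) (hld : ℓ ≤ d) (hd2 : 2 ≤ d) (hdn : d ≤ n)
    (hℓbig : 16*(4*γ*Lf+1)^2 ≤ (ℓ:ℝ))
    (hnbig : 8*(4*γ*Lf+1)^4 ≤ (n:ℝ)/(2*(d:ℝ)))
    (g : (ZMod n → Bool) → ℝ) (hg : nuExp n ρ (fun η => g η ^ 2) = 1) :
    γ * nuExp n ρ (fun η => (Wf n m f ℓ η - Wf n m f d η) * g η ^ 2)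
      + (1/(n:ℝ)) * nuExp n ρ (fun η => g η * Lgen n cp cm g η) ≤ 3 := by
  have hNg : Nrm n ρ g = 1 := by unfold Nrm; rw [hg, Real.sqrt_one]
  set a : ℝ := 4*γ*Lf + 1 with haa
  have ha1 : 1 ≤ a := by nlinarith
  have hγLf : 4*γ*Lf ≤ a := by rw [haa]; linarith
  have hγLf0 : 0 ≤ γ * Lf := mul_nonneg hγ.le hLf0
  set D : ℝ := Dform n ρ g with hD
  have hD0 : 0 ≤ D := Dform_nonneg h0 h1 g
  have hd0 : (0:ℝ) < (d:ℝ) := by exact_mod_cast (by omega : 0 < d)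
  have hn0 : (0:ℝ) < (n:ℝ) := by
    have : 0 < n := by omega
    exact_mod_cast this
  set K : ℝ := Real.sqrt (d:ℝ) * Real.sqrt D with hK
  have hK0 : 0 ≤ K := mul_nonneg (Real.sqrt_nonneg _) (Real.sqrt_nonneg _)
  set t : ℝ := Real.sqrt K with ht
  have ht0 : 0 ≤ t := Real.sqrt_nonneg _
  have ht2 : t^2 = K := Real.sq_sqrt hK0
  have hK2 : K^2 = (d:ℝ) * D := by
    rw [hK, mul_pow, Real.sq_sqrt (le_of_lt hd0), Real.sq_sqrt hD0]
  have ht4 : t^4 = (d:ℝ) * D := by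
    have : t^4 = (t^2)^2 := by ring
    rw [this, ht2, hK2]
  -- Step 1: the γ-term
  have hWpt : ∀ η : ZMod n → Bool, (Wf n m f ℓ η - Wf n m f d η) * g η ^ 2
      ≤ Lf * (|blockAvg n d η - blockAvg n ℓ η| * g η ^ 2) := by
    intro η
    have e1 : Wf n m f ℓ η - Wf n m f d η
        = fbar m f (blockAvg n d η) - fbar m f (blockAvg n ℓ η) := by
      unfold Wf; ring
    rw [e1]
    have hbd := blockAvg_mem (le_trans hl hld) (η := η) (n := n)
    have hbl := blockAvg_mem hl (η := η) (n := n)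
    have h2 : fbar m f (blockAvg n d η) - fbar m f (blockAvg n ℓ η)
        ≤ Lf * |blockAvg n d η - blockAvg n ℓ η| := by
      refine le_trans (le_abs_self _) (hLf _ _ hbd.1 hbd.2 hbl.1 hbl.2)
    calc (fbar m f (blockAvg n d η) - fbar m f (blockAvg n ℓ η)) * g η ^ 2
        ≤ (Lf * |blockAvg n d η - blockAvg n ℓ η|) * g η ^ 2 :=
          mul_le_mul_of_nonneg_right h2 (sq_nonneg _)
      _ = Lf * (|blockAvg n d η - blockAvg n ℓ η| * g η ^ 2) := by ring
  have hstep1 : nuExp n ρ (fun η => (Wf n m f ℓ η - Wf n m f d η) * g η ^ 2)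
      ≤ Lf * nuExp n ρ (fun η => |blockAvg n d η - blockAvg n ℓ η| * g η ^ 2) := by
    refine le_trans (nuExp_mono h0 h1 hWpt) (le_of_eq ?_)
    rw [← nuExp_smul]
  -- Step 2: Cauchy-Schwarz for the |Δ| g² term
  have hstep2 : nuExp n ρ (fun η => |blockAvg n d η - blockAvg n ℓ η| * g η ^ 2)
      ≤ Real.sqrt (nuExp n ρ (fun η =>
          (blockAvg n d η - blockAvg n ℓ η)^2 * g η ^ 2)) := by
    have hfun : (fun η : ZMod n → Bool => |blockAvg n d η - blockAvg n ℓ η| * g η ^ 2)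
        = fun η => (|blockAvg n d η - blockAvg n ℓ η| * |g η|) * |g η| := by
      funext η
      rw [mul_assoc, abs_mul_abs_self, ← sq]
    rw [hfun]
    refine le_trans (nuExp_mul_le h0 h1 _ _) ?_
    rw [Nrm_abs (g := g), hNg, mul_one]
    apply le_of_eq
    unfold Nrm
    congr 1
    apply congrArg
    funext η
    rw [mul_pow, sq_abs, sq_abs]
  -- Step 3: the Q bound
  have hstep3 : nuExp n ρ (fun η => (blockAvg n d η - blockAvg n ℓ η)^2 * g η ^ 2)
      ≤ 4/(ℓ:ℝ) + 16 * K := by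
    have hfun : (fun η : ZMod n → Bool => (blockAvg n d η - blockAvg n ℓ η)^2 * g η ^ 2)
        = fun η => (∑ x ∈ Finset.Icc 1 d, cc ℓ d x * ee n x η)^2 * g η ^ 2 := by
      funext η
      rw [blockAvg_sub hl hld]
    rw [hfun, hK, hD]
    exact Q_bound h0 h1 g hg hl hld hd2 hdn
  -- Step 4: split the square root
  have hQ0 : (0:ℝ) ≤ 4/(ℓ:ℝ) := by positivity
  have hl0 : (0:ℝ) < (ℓ:ℝ) := by exact_mod_cast hl
  have hstep4 : Real.sqrt (4/(ℓ:ℝ) + 16*K) ≤ Real.sqrt (4/(ℓ:ℝ)) + 4 * t := by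
    refine le_trans (sqrt_add_le hQ0 (by linarith)) ?_
    have h16 : Real.sqrt (16*K) = 4 * t := by
      rw [Real.sqrt_mul (by norm_num : (0:ℝ) ≤ 16) K, ht]
      congr 1
      rw [show (16:ℝ) = 4^2 by norm_num, Real.sqrt_sq (by norm_num : (0:ℝ) ≤ 4)]
    linarith [h16.le, h16.ge]
  -- Step 5: bound on √(4/ℓ)
  have hstep5 : Real.sqrt (4/(ℓ:ℝ)) ≤ 1/(2*a) := by
    have ha0 : (0:ℝ) < a := by linarith
    have hsq : 4/(ℓ:ℝ) ≤ (1/(2*a))^2 := by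
      have h1' : 4/(ℓ:ℝ) ≤ 4/(16*a^2) := by
        apply div_le_div_of_nonneg_left (by norm_num) (by positivity) hℓbig
      have h2' : (4:ℝ)/(16*a^2) = (1/(2*a))^2 := by field_simp; ring
      linarith
    calc Real.sqrt (4/(ℓ:ℝ)) ≤ Real.sqrt ((1/(2*a))^2) := Real.sqrt_le_sqrt hsq
      _ = 1/(2*a) := Real.sqrt_sq (by positivity)
  -- Step 6: generator bound
  have hgen := gen_bound h0 h1 cp cm hcp hcm g hg
  have hstep6 : (1/(n:ℝ)) * nuExp n ρ (fun η => g η * Lgen n cp cm g η)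
      ≤ -((n:ℝ)/2) * D + 2 := by
    have hmul := mul_le_mul_of_nonneg_left hgen (by positivity : (0:ℝ) ≤ 1/(n:ℝ))
    refine le_trans hmul (le_of_eq ?_)
    rw [hD]
    field_simp
  -- Step 7: assemble
  have hγnn : 0 ≤ γ := hγ.le
  have hγW : γ * nuExp n ρ (fun η => (Wf n m f ℓ η - Wf n m f d η) * g η ^ 2)
      ≤ γ * Lf * (Real.sqrt (4/(ℓ:ℝ)) + 4 * t) := by
    have c1 : nuExp n ρ (fun η => (Wf n m f ℓ η - Wf n m f d η) * g η ^ 2)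
        ≤ Lf * (Real.sqrt (4/(ℓ:ℝ)) + 4 * t) := by
      refine le_trans hstep1 ?_
      have c2 : nuExp n ρ (fun η => |blockAvg n d η - blockAvg n ℓ η| * g η ^ 2)
          ≤ Real.sqrt (4/(ℓ:ℝ)) + 4 * t := by
        refine le_trans hstep2 (le_trans (Real.sqrt_le_sqrt hstep3) hstep4)
      exact le_trans (mul_le_mul_of_nonneg_left c2 hLf0) (le_of_eq rfl)
    calc γ * nuExp n ρ (fun η => (Wf n m f ℓ η - Wf n m f d η) * g η ^ 2)
        ≤ γ * (Lf * (Real.sqrt (4/(ℓ:ℝ)) + 4 * t)) :=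
          mul_le_mul_of_nonneg_left c1 hγnn
      _ = γ * Lf * (Real.sqrt (4/(ℓ:ℝ)) + 4 * t) := by ring
  -- term 1: γ Lf √(4/ℓ) ≤ 1/2
  have hterm1 : γ * Lf * Real.sqrt (4/(ℓ:ℝ)) ≤ 1/2 := by
    have ha0 : (0:ℝ) < a := by linarith
    have h1' : γ * Lf * Real.sqrt (4/(ℓ:ℝ)) ≤ γ * Lf * (1/(2*a)) :=
      mul_le_mul_of_nonneg_left hstep5 hγLf0
    have h2' : γ * Lf * (1/(2*a)) ≤ a * (1/(2*a)) := by
      apply mul_le_mul_of_nonneg_right _ (by positivity)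
      linarith
    have h3' : a * (1/(2*a)) = 1/2 := by field_simp
    linarith
  -- term 2: 4 γ Lf t - (n/2) D ≤ 1/2
  have hterm2 : γ * Lf * (4 * t) - ((n:ℝ)/2) * D ≤ 1/2 := by
    have hct : ((n:ℝ)/(2*(d:ℝ))) * t^4 = ((n:ℝ)/2) * D := by
      rw [ht4]
      field_simp
    have hsc := scalar_opt ha1 ht0 hnbig
    have h4' : γ * Lf * (4 * t) ≤ a * t := by
      have : γ * Lf * (4 * t) = (4*γ*Lf) * t := by ring
      rw [this]
      exact mul_le_mul_of_nonneg_right hγLf ht0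
    linarith [hct ▸ hsc]
  linarith

/-! ### bound on the variational supremum -/

omit [NeZero n] in
lemma twoBlocksSup_le3 (hρ0 : 0 ≤ ρ) (hρ1 : ρ ≤ 1)
    (cp cm : (ℤ → Bool) → ℝ)
    (hcp : ∀ ξ, cp ξ ∈ Set.Icc (0:ℝ) 1) (hcm : ∀ ξ, cm ξ ∈ Set.Icc (0:ℝ) 1)
    (f : (ℤ → Bool) → ℝ) (m : ℕ)
    (γ : ℝ) (hγ : 0 < γ) (Lf : ℝ) (hLf0 : 0 ≤ Lf)
    (hLf : ∀ θ θ' : ℝ, 0 ≤ θ → θ ≤ 1 → 0 ≤ θ' → θ' ≤ 1 →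
      |fbar m f θ - fbar m f θ'| ≤ Lf * |θ - θ'|)
    {ℓ nn : ℕ} {ε : ℝ}
    (hl : 1 ≤ ℓ) (hℓbig : 16*(4*γ*Lf+1)^2 ≤ (ℓ:ℝ))
    (hε0 : 0 < ε) (hεs : ε ≤ 1/(16*(4*γ*Lf+1)^4))
    (hεn : (ℓ:ℝ) + 2 ≤ ε * nn) :
    twoBlocksSup ρ cp cm f m γ ℓ ε nn ≤ ((3:ℝ) : EReal) := by
  have hγLf0 : 0 ≤ γ * Lf := mul_nonneg hγ.le hLf0
  have ha1 : (1:ℝ) ≤ 4*γ*Lf+1 := by nlinarith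
  have ha0 : (0:ℝ) < 4*γ*Lf+1 := by linarith
  have hℓ0 : (0:ℝ) ≤ (ℓ:ℝ) := Nat.cast_nonneg _
  have hn0 : nn ≠ 0 := by
    intro h
    rw [h] at hεn
    push_cast at hεn
    nlinarith
  rw [twoBlocksSup, dif_neg hn0]
  letI : NeZero nn := ⟨hn0⟩
  apply sSup_le
  rintro v ⟨g, hg, rfl⟩
  rw [EReal.coe_le_coe_iff]
  set d := ⌊ε * (nn:ℝ)⌋₊ with hd
  have hnn0 : (0:ℝ) < (nn:ℝ) := by
    have : 0 < nn := Nat.pos_of_ne_zero hn0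
    exact_mod_cast this
  have hεnn0 : (0:ℝ) ≤ ε * nn := by positivity
  have hdle : (d:ℝ) ≤ ε * nn := Nat.floor_le hεnn0
  have hl1d : ℓ + 1 ≤ d := Nat.le_floor (by push_cast; linarith)
  have hld : ℓ ≤ d := by omega
  have hd2 : 2 ≤ d := by omega
  have hd0 : (0:ℝ) < (d:ℝ) := by exact_mod_cast (by omega : 0 < d)
  have hεhalf : ε ≤ 1/2 := by
    refine le_trans hεs ?_
    have h16 : (2:ℝ) ≤ 16*(4*γ*Lf+1)^4 := by nlinarith [pow_le_pow_left₀ (by norm_num : (0:ℝ) ≤ 1) ha1 4]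
    have := one_div_le_one_div_of_le (by norm_num : (0:ℝ) < 2) h16
    linarith
  have hdn : d ≤ nn := by
    have h1 : (d:ℝ) ≤ (nn:ℝ) := by nlinarith
    exact_mod_cast h1
  have hnbig : 8*(4*γ*Lf+1)^4 ≤ (nn:ℝ)/(2*(d:ℝ)) := by
    have h1 : 1/(2*ε) ≤ (nn:ℝ)/(2*(d:ℝ)) := by
      rw [div_le_div_iff₀ (by positivity) (by positivity)]
      nlinarith
    have h2 : 8*(4*γ*Lf+1)^4 ≤ 1/(2*ε) := by
      rw [le_div_iff₀ (by positivity)]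
      have h3 := mul_le_mul_of_nonneg_left hεs
        (by positivity : (0:ℝ) ≤ 16*(4*γ*Lf+1)^4)
      have h4 : 16*(4*γ*Lf+1)^4 * (1/(16*(4*γ*Lf+1)^4)) = 1 := by
        field_simp
      nlinarith
    linarith
  exact objective_bound hρ0 hρ1 cp cm hcp hcm f m γ hγ Lf hLf0 hLf hl hld hd2 hdn
    hℓbig hnbig g hg

end TB

/-- **Two-blocks estimate.** There is a finite constant `C` such that
for every `γ > 0`,
`limsup_{ℓ→∞} limsup_{ε→0⁺} limsup_{n→∞}
   sup_g { γ ⟨W_f^ℓ − W_f^{⌊εn⌋}, g²⟩ + (1/n)⟨g, L_n g⟩ } ≤ C`. -/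
theorem two_blocks_estimate
    (ρ : ℝ) (hρ0 : 0 < ρ) (hρ1 : ρ < 1)
    (cp cm : (ℤ → Bool) → ℝ)
    (hcp01 : ∀ ξ, cp ξ ∈ Set.Icc (0 : ℝ) 1) (hcm01 : ∀ ξ, cm ξ ∈ Set.Icc (0 : ℝ) 1)
    (hsum : ∀ ξ, cp ξ + cm ξ = 1)
    (hcploc : ∃ s : Finset ℤ, ∀ ξ ζ : ℤ → Bool, (∀ k ∈ s, ξ k = ζ k) → cp ξ = cp ζ)
    (hcmloc : ∃ s : Finset ℤ, ∀ ξ ζ : ℤ → Bool, (∀ k ∈ s, ξ k = ζ k) → cm ξ = cm ζ)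
    (f : (ℤ → Bool) → ℝ) (m : ℕ)
    (hfloc : ∀ ξ ζ : ℤ → Bool, (∀ k : ℤ, 1 ≤ k → k ≤ (m : ℤ) → ξ k = ζ k) → f ξ = f ζ) :
    ∃ C : ℝ, ∀ γ : ℝ, 0 < γ →
      limsup (fun ℓ : ℕ =>
          limsup (fun ε : ℝ =>
              limsup (fun n : ℕ => twoBlocksSup ρ cp cm f m γ ℓ ε n) atTop)
            (nhdsWithin 0 (Set.Ioi 0))) atTop
        ≤ (C : EReal) := by
  obtain ⟨Lf, hLf0, hLf⟩ := TB.fbar_lip m f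
  refine ⟨3, fun γ hγ => ?_⟩
  have hγLf0 : 0 ≤ γ * Lf := mul_nonneg hγ.le hLf0
  have ha1 : (1:ℝ) ≤ 4*γ*Lf+1 := by nlinarith
  have ha0 : (0:ℝ) < 4*γ*Lf+1 := by linarith
  have hε₀0 : (0:ℝ) < 1/(16*(4*γ*Lf+1)^4) := by positivity
  apply Filter.limsup_le_of_le (by isBoundedDefault)
  rw [Filter.eventually_atTop]
  refine ⟨max 1 ⌈16*(4*γ*Lf+1)^2⌉₊, fun ℓ hℓ => ?_⟩
  have hl1 : 1 ≤ ℓ := le_trans (le_max_left _ _) hℓ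
  have hℓbig : 16*(4*γ*Lf+1)^2 ≤ (ℓ:ℝ) := by
    refine le_trans (Nat.le_ceil _) ?_
    exact_mod_cast le_trans (le_max_right _ _) hℓ
  apply Filter.limsup_le_of_le (by isBoundedDefault)
  filter_upwards [Ioo_mem_nhdsGT_of_mem
    (⟨le_rfl, hε₀0⟩ : (0:ℝ) ∈ Set.Ico 0 (1/(16*(4*γ*Lf+1)^4)))] with ε hε
  apply Filter.limsup_le_of_le (by isBoundedDefault)
  rw [Filter.eventually_atTop]
  refine ⟨⌈((ℓ:ℝ)+2)/ε⌉₊, fun nn hnn => ?_⟩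
  have hdiv : ((ℓ:ℝ)+2)/ε ≤ (nn:ℝ) := le_trans (Nat.le_ceil _) (Nat.cast_le.mpr hnn)
  have hεn : (ℓ:ℝ)+2 ≤ ε * nn := by
    rw [div_le_iff₀ hε.1] at hdiv
    rw [mul_comm]
    linarith
  exact TB.twoBlocksSup_le3 hρ0.le hρ1.le cp cm hcp01 hcm01 f m γ hγ Lf hLf0 hLf
    hl1 hℓbig hε.1 hε.2.le hεn

end
end

section
/- Finiteness of the random-walk rate function. The quantity I is finite if and only if the following three integrals are finite: ∫₀ᵀ |x'(t)| log⁺|x'(t)| dt, ∫₀ᵀ (x'(t))⁺ log⁺(1/w⁺(t)) dt, and ∫₀ᵀ (x'(t))⁻ log⁺(1/w⁻(t)) dt (with the conventions log⁺(1/0) = +∞ and 0·(+∞) = 0). -/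
open MeasureTheory
open scoped ENNReal

noncomputable section

/-- `F(a) = ∫₀ᵀ ( a(t)x'(t) − w⁺(t)(e^{a(t)} − 1) − w⁻(t)(e^{−a(t)} − 1) ) dt`. -/
def Frate (T : ℝ) (x' wp wm : ℝ → ℝ) (a : ℝ → ℝ) : ℝ :=
  ∫ t in Set.Ioc 0 T,
    (a t * x' t - wp t * (Real.exp (a t) - 1) - wm t * (Real.exp (-a t) - 1))

/-- The random-walk rate function
`I = sup { F(a) : a bounded Borel measurable }`, a value in `[0, +∞]`. -/
def Irate (T : ℝ) (x' wp wm : ℝ → ℝ) : EReal :=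
  sSup {v : EReal | ∃ a : ℝ → ℝ, Measurable a ∧ (∃ K : ℝ, ∀ t, |a t| ≤ K) ∧
    v = ((Frate T x' wp wm a : ℝ) : EReal)}

/-- `log⁺(1/w)`, with the convention `log⁺(1/0) = +∞`. -/
def plogInv (w : ℝ) : ℝ≥0∞ :=
  if w = 0 then ⊤ else ENNReal.ofReal (Real.log w⁻¹)

/-!
Pointwise, Young's inequality for `exp` gives `a σ - w (eᵃ - 1) ≤ σ log (σ / w) - σ + w`, and
`σ log (σ / w) ≤ σ (log⁺ σ + log⁺ (1 / w))`. Splitting `a x'` according to the sign of `x'`, every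
`F(a)` is therefore bounded by the sum of the three integrals plus `2 M T`.

Conversely, on `{x' > 0}` take `a = min (n, log⁺ x' + log⁺ (1 / w⁺))` (and symmetrically on
`{x' < 0}`). Then `w⁺ eᵃ ≤ (1 + M) (1 + |x'|)` for every `n`, while `a x'` increases to
`x' (log⁺ x' + log⁺ (1 / w⁺))`; by monotone convergence `F(a)` is unbounded as soon as one of the
three integrals diverges.
-/

open Set

def rateIntegrand (a s wp wm : ℝ) : ℝ :=
  a * s - wp * (Real.exp a - 1) - wm * (Real.exp (-a) - 1)

def logCost (σ w : ℝ) : ℝ≥0∞ :=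
  ENNReal.ofReal (max (Real.log σ) 0) + plogInv w

/-- `σ⁺ (log⁺ σ + log⁺ (1 / w))`: the positive part comes from `ENNReal.ofReal` and `0 * ⊤ = 0`. -/
def jumpCost (σ w : ℝ) : ℝ≥0∞ :=
  ENNReal.ofReal σ * logCost σ w

/-- A truncated near-maximizer of `a ↦ a σ - w (eᵃ - 1)`, whose maximizer is `log (σ / w)`. -/
def tilt (n : ℕ) (σ w : ℝ) : ℝ :=
  if 0 < σ then (min (n : ℝ≥0∞) (logCost σ w)).toReal else 0

lemma rateIntegrand_neg_left (a s wp wm : ℝ) :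
    rateIntegrand (-a) s wp wm = rateIntegrand a (-s) wm wp := by
  simp only [rateIntegrand, neg_neg]
  ring

lemma mul_sub_mul_exp_le_mul_log_div (a : ℝ) {σ w : ℝ} (hσ : 0 < σ) (hw : 0 < w) :
    a * σ - w * Real.exp a ≤ σ * Real.log (σ / w) - σ := by
  have h := Real.add_one_le_exp (a - Real.log (σ / w))
  rw [Real.exp_sub, Real.exp_log (div_pos hσ hw), div_div_eq_mul_div,
    le_div_iff₀ hσ] at h
  linarith

lemma logCost_of_pos_right (σ : ℝ) {w : ℝ} (hw : 0 < w) :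
    logCost σ w = ENNReal.ofReal (max (Real.log σ) 0 + max (Real.log w⁻¹) 0) := by
  rw [logCost, plogInv, if_neg hw.ne', ENNReal.ofReal_add (le_max_right _ _) (le_max_right _ _)]
  simp

lemma jumpCost_of_pos_right (σ : ℝ) {w : ℝ} (hw : 0 < w) :
    jumpCost σ w = ENNReal.ofReal (σ * (max (Real.log σ) 0 + max (Real.log w⁻¹) 0)) := by
  rw [jumpCost, logCost_of_pos_right σ hw, ENNReal.ofReal_mul' (by positivity)]

lemma jumpCost_of_nonpos {σ : ℝ} (w : ℝ) (hσ : σ ≤ 0) : jumpCost σ w = 0 := by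
  rw [jumpCost, ENNReal.ofReal_of_nonpos hσ, zero_mul]

lemma jumpCost_zero_right {σ : ℝ} (hσ : 0 < σ) : jumpCost σ 0 = ⊤ := by
  simp [jumpCost, logCost, plogInv, hσ]

lemma rateIntegrand_le_toReal_jumpCost (a : ℝ) {σ w w' M : ℝ} (hσ : 0 ≤ σ) (hw : w ∈ Icc 0 M)
    (hw' : w' ∈ Icc 0 M) (h : jumpCost σ w ≠ ⊤) :
    rateIntegrand a σ w w' ≤ (jumpCost σ w).toReal + 2 * M := by
  have hw'_term : -(w' * (Real.exp (-a) - 1)) ≤ M := by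
    nlinarith [mul_nonneg hw'.1 (Real.exp_pos (-a)).le, hw'.2]
  rcases hσ.eq_or_lt with rfl | hσ
  · rw [jumpCost_of_nonpos w le_rfl, ENNReal.toReal_zero]
    unfold rateIntegrand
    nlinarith [mul_nonneg hw.1 (Real.exp_pos a).le, hw.2]
  have hw0 : 0 < w := hw.1.lt_of_ne' fun h0 => h (h0 ▸ jumpCost_zero_right hσ)
  rw [jumpCost_of_pos_right σ hw0, ENNReal.toReal_ofReal (by positivity)]
  have young := mul_sub_mul_exp_le_mul_log_div a hσ hw0
  have hlog : Real.log (σ / w) = Real.log σ + Real.log w⁻¹ := by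
    rw [div_eq_mul_inv, Real.log_mul hσ.ne' (inv_ne_zero hw0.ne')]
  have h1 := mul_le_mul_of_nonneg_left (le_max_left (Real.log σ) 0) hσ.le
  have h2 := mul_le_mul_of_nonneg_left (le_max_left (Real.log w⁻¹) 0) hσ.le
  unfold rateIntegrand
  nlinarith [hw.2]

lemma rateIntegrand_le (a : ℝ) {s wp wm M : ℝ} (hwp : wp ∈ Icc 0 M) (hwm : wm ∈ Icc 0 M)
    (hp : jumpCost s wp ≠ ⊤) (hm : jumpCost (-s) wm ≠ ⊤) :
    rateIntegrand a s wp wm ≤ (jumpCost s wp).toReal + (jumpCost (-s) wm).toReal + 2 * M := by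
  rcases le_total 0 s with hs | hs
  · have := rateIntegrand_le_toReal_jumpCost a hs hwp hwm hp
    linarith [(jumpCost (-s) wm).toReal_nonneg]
  · have := rateIntegrand_le_toReal_jumpCost (-a) (neg_nonneg.2 hs) hwm hwp hm
    rw [rateIntegrand_neg_left, neg_neg] at this
    linarith [(jumpCost s wp).toReal_nonneg]

lemma tilt_nonneg (n : ℕ) (σ w : ℝ) : 0 ≤ tilt n σ w := by
  unfold tilt
  split_ifs
  exacts [ENNReal.toReal_nonneg, le_rfl]

lemma tilt_le (n : ℕ) (σ w : ℝ) : tilt n σ w ≤ n := by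
  unfold tilt
  split_ifs
  · simpa using ENNReal.toReal_mono (ENNReal.natCast_ne_top n) (min_le_left _ (logCost σ w))
  · exact n.cast_nonneg

lemma tilt_of_nonpos (n : ℕ) {σ : ℝ} (w : ℝ) (hσ : σ ≤ 0) : tilt n σ w = 0 :=
  if_neg hσ.not_gt

lemma tilt_mul_self_nonneg (n : ℕ) (σ w : ℝ) : 0 ≤ tilt n σ w * σ := by
  rcases le_or_gt σ 0 with hσ | hσ
  · rw [tilt_of_nonpos n w hσ, zero_mul]
  · exact mul_nonneg (tilt_nonneg n σ w) hσ.le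

lemma monotone_tilt_mul_self (σ w : ℝ) : Monotone fun n => tilt n σ w * σ := by
  intro n m hnm
  rcases le_or_gt σ 0 with hσ | hσ
  · simp only [tilt_of_nonpos _ w hσ, le_rfl]
  refine mul_le_mul_of_nonneg_right ?_ hσ.le
  simp only [tilt, if_pos hσ]
  exact ENNReal.toReal_mono (ne_top_of_le_ne_top (ENNReal.natCast_ne_top m) (min_le_left _ _))
    (min_le_min_right _ (Nat.cast_le.2 hnm))

lemma iSup_ofReal_tilt_mul_self (σ w : ℝ) :
    ⨆ n : ℕ, ENNReal.ofReal (tilt n σ w * σ) = jumpCost σ w := by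
  rcases le_or_gt σ 0 with hσ | hσ
  · simp [tilt_of_nonpos _ w hσ, jumpCost_of_nonpos w hσ]
  have h : ∀ n : ℕ, ENNReal.ofReal (tilt n σ w * σ) =
      min (n : ℝ≥0∞) (logCost σ w) * ENNReal.ofReal σ := by
    intro n
    rw [tilt, if_pos hσ, ENNReal.ofReal_mul ENNReal.toReal_nonneg, ENNReal.ofReal_toReal
      (ne_top_of_le_ne_top (ENNReal.natCast_ne_top n) (min_le_left _ _))]
  calc ⨆ n : ℕ, ENNReal.ofReal (tilt n σ w * σ)
      = (⨆ n : ℕ, (n : ℝ≥0∞) ⊓ logCost σ w) * ENNReal.ofReal σ := by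
        simp_rw [h, ENNReal.iSup_mul]
    _ = jumpCost σ w := by
        rw [← iSup_inf_eq, ENNReal.iSup_natCast, top_inf_eq, jumpCost, mul_comm]

lemma mul_exp_tilt_le (n : ℕ) (σ : ℝ) {w M : ℝ} (hw : w ∈ Icc 0 M) :
    w * Real.exp (tilt n σ w) ≤ (1 + M) * (1 + |σ|) := by
  have hM : 0 ≤ M := hw.1.trans hw.2
  rcases le_or_gt σ 0 with hσ | hσ
  · rw [tilt_of_nonpos n w hσ, Real.exp_zero, mul_one]
    nlinarith [abs_nonneg σ, hw.2]
  rcases hw.1.eq_or_lt with rfl | hw0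
  · rw [zero_mul]
    positivity
  have hlogσ : max (Real.log σ) 0 ≤ Real.log (1 + σ) :=
    max_le (Real.log_le_log hσ (by linarith)) (Real.log_nonneg (by linarith))
  have hlogw : max (Real.log w⁻¹) 0 ≤ Real.log (1 + w⁻¹) :=
    max_le (Real.log_le_log (by positivity) (by linarith)) (Real.log_nonneg (by simp; positivity))
  have htilt : tilt n σ w ≤ Real.log ((1 + σ) * (1 + w⁻¹)) := by
    rw [Real.log_mul (by positivity) (by positivity), tilt, if_pos hσ]
    refine ENNReal.toReal_le_of_le_ofReal
      (add_nonneg ((le_max_right _ _).trans hlogσ) ((le_max_right _ _).trans hlogw))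
      ((min_le_right _ _).trans ?_)
    rw [logCost_of_pos_right σ hw0]
    exact ENNReal.ofReal_le_ofReal (add_le_add hlogσ hlogw)
  calc w * Real.exp (tilt n σ w) ≤ w * ((1 + σ) * (1 + w⁻¹)) := by
        gcongr
        exact (Real.exp_le_exp.2 htilt).trans_eq (Real.exp_log (by positivity))
    _ = (w + 1) * (1 + σ) := by field_simp
    _ ≤ (1 + M) * (1 + |σ|) := by
        rw [abs_of_pos hσ]
        nlinarith [hw.2]

lemma sub_le_rateIntegrand_tilt (n : ℕ) (σ : ℝ) {w w' M : ℝ} (hw : w ∈ Icc 0 M) (hw' : 0 ≤ w') :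
    tilt n σ w * σ - (1 + M) * (1 + |σ|) ≤ rateIntegrand (tilt n σ w) σ w w' := by
  have hexp := mul_exp_tilt_le n σ hw
  have hexp_neg : Real.exp (-tilt n σ w) ≤ 1 :=
    Real.exp_le_one_iff.2 (neg_nonpos.2 (tilt_nonneg n σ w))
  unfold rateIntegrand
  nlinarith [mul_nonneg hw' (sub_nonneg.2 hexp_neg), hw.1]

lemma sub_le_rateIntegrand_tilt_sub_tilt (n : ℕ) (s : ℝ) {wp wm M : ℝ} (hwp : wp ∈ Icc 0 M)
    (hwm : wm ∈ Icc 0 M) :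
    tilt n s wp * s + tilt n (-s) wm * (-s) - (1 + M) * (1 + |s|) ≤
      rateIntegrand (tilt n s wp - tilt n (-s) wm) s wp wm := by
  rcases le_or_gt s 0 with hs | hs
  · rw [tilt_of_nonpos n wp hs, zero_sub, zero_mul, zero_add, rateIntegrand_neg_left, ← abs_neg]
    exact sub_le_rateIntegrand_tilt n (-s) hwm hwp.1
  · rw [tilt_of_nonpos n wm (neg_nonpos.2 hs.le), sub_zero, zero_mul, add_zero]
    exact sub_le_rateIntegrand_tilt n s hwp hwm.1

lemma ofReal_abs_mul_log_add_eq_jumpCost (s wp wm : ℝ) :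
    ENNReal.ofReal (|s| * max (Real.log |s|) 0) + ENNReal.ofReal (max s 0) * plogInv wp
      + ENNReal.ofReal (max (-s) 0) * plogInv wm = jumpCost s wp + jumpCost (-s) wm := by
  rcases le_total 0 s with hs | hs
  · rw [abs_of_nonneg hs, max_eq_left hs, max_eq_right (neg_nonpos.2 hs),
      jumpCost_of_nonpos wm (neg_nonpos.2 hs), jumpCost, logCost, mul_add,
      ENNReal.ofReal_mul hs]
    simp
  · rw [abs_of_nonpos hs, max_eq_right hs, max_eq_left (neg_nonneg.2 hs),
      jumpCost_of_nonpos wp hs, jumpCost, logCost, mul_add,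
      ENNReal.ofReal_mul (neg_nonneg.2 hs)]
    simp

lemma measurable_plogInv : Measurable plogInv :=
  Measurable.ite (measurableSet_singleton 0) measurable_const
    (Real.measurable_log.comp measurable_inv).ennreal_ofReal

section Measurability

variable {α : Type*} [MeasurableSpace α] {f g : α → ℝ}

lemma Measurable.logCost (hf : Measurable f) (hg : Measurable g) :
    Measurable fun x => logCost (f x) (g x) :=
  (hf.log.max measurable_const).ennreal_ofReal.add (measurable_plogInv.comp hg)

lemma Measurable.jumpCost (hf : Measurable f) (hg : Measurable g) :
    Measurable fun x => jumpCost (f x) (g x) :=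
  hf.ennreal_ofReal.mul (hf.logCost hg)

lemma Measurable.tilt (n : ℕ) (hf : Measurable f) (hg : Measurable g) :
    Measurable fun x => tilt n (f x) (g x) :=
  Measurable.ite (measurableSet_lt measurable_const hf)
    (ENNReal.measurable_toReal.comp (measurable_const.min (hf.logCost hg))) measurable_const

end Measurability

lemma exists_le_integral_of_lintegral_iSup_eq_top {α : Type*} [MeasurableSpace α] {μ : Measure α}
    {g : ℕ → α → ℝ} (hg : ∀ n, Integrable (g n) μ) (hg_nonneg : ∀ n, 0 ≤ᵐ[μ] g n)
    (hg_mono : ∀ᵐ x ∂μ, Monotone fun n => g n x)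
    (htop : ∫⁻ x, ⨆ n, ENNReal.ofReal (g n x) ∂μ = ⊤) (C : ℝ) :
    ∃ n, C ≤ ∫ x, g n x ∂μ := by
  rw [lintegral_iSup' (fun n => (hg n).aemeasurable.ennreal_ofReal)
    (hg_mono.mono fun x hx _ _ h => ENNReal.ofReal_le_ofReal (hx h)), iSup_eq_top] at htop
  obtain ⟨n, hn⟩ := htop (ENNReal.ofReal C) ENNReal.ofReal_lt_top
  rw [← ofReal_integral_eq_lintegral_ofReal (hg n) (hg_nonneg n)] at hn
  exact ⟨n, (ENNReal.ofReal_lt_ofReal_iff'.1 hn).1.le⟩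

section RateIntegral

variable {α : Type*} [MeasurableSpace α] {μ : Measure α} [IsFiniteMeasure μ]
  {s wp wm : α → ℝ} {M : ℝ}

lemma integrable_rateIntegrand (hs : Integrable s μ) (hwp_meas : Measurable wp)
    (hwm_meas : Measurable wm) (hwp : ∀ t, wp t ∈ Icc 0 M) (hwm : ∀ t, wm t ∈ Icc 0 M)
    {a : α → ℝ} (ha : Measurable a) {K : ℝ} (hK : ∀ t, |a t| ≤ K) :
    Integrable (fun t => rateIntegrand (a t) (s t) (wp t) (wm t)) μ := by
  have hweighted : ∀ {w b : α → ℝ}, Measurable w → (∀ t, w t ∈ Icc 0 M) → Measurable b →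
      (∀ t, |b t| ≤ K) → Integrable (fun t => w t * (Real.exp (b t) - 1)) μ := by
    intro w b hw_meas hw hb_meas hb
    refine Integrable.of_bound (by fun_prop) (M * (Real.exp K + 1)) (ae_of_all _ fun t => ?_)
    rw [norm_mul, Real.norm_eq_abs, Real.norm_eq_abs, abs_of_nonneg (hw t).1]
    refine mul_le_mul (hw t).2 ((abs_sub _ _).trans ?_) (abs_nonneg _) ((hw t).1.trans (hw t).2)
    rw [abs_of_pos (Real.exp_pos _), abs_one]
    gcongr
    exact (le_abs_self _).trans (hb t)
  exact ((hs.bdd_mul ha.aestronglyMeasurable (ae_of_all _ fun t => by simpa using hK t)).sub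
    (hweighted hwp_meas hwp ha hK)).sub (hweighted hwm_meas hwm ha.neg fun t => by simpa using hK t)

lemma integral_rateIntegrand_le (hs_meas : Measurable s) (hs : Integrable s μ)
    (hwp_meas : Measurable wp) (hwm_meas : Measurable wm) (hwp : ∀ t, wp t ∈ Icc 0 M)
    (hwm : ∀ t, wm t ∈ Icc 0 M) (hp : ∫⁻ t, jumpCost (s t) (wp t) ∂μ ≠ ⊤)
    (hm : ∫⁻ t, jumpCost (-s t) (wm t) ∂μ ≠ ⊤) {a : α → ℝ} (ha : Measurable a) {K : ℝ}
    (hK : ∀ t, |a t| ≤ K) :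
    ∫ t, rateIntegrand (a t) (s t) (wp t) (wm t) ∂μ ≤
      ∫ t, ((jumpCost (s t) (wp t)).toReal + (jumpCost (-s t) (wm t)).toReal + 2 * M) ∂μ := by
  have hp_meas := hs_meas.jumpCost hwp_meas
  have hm_meas := hs_meas.neg.jumpCost hwm_meas
  refine integral_mono_ae (integrable_rateIntegrand hs hwp_meas hwm_meas hwp hwm ha hK)
    (((integrable_toReal_of_lintegral_ne_top hp_meas.aemeasurable hp).add
      (integrable_toReal_of_lintegral_ne_top hm_meas.aemeasurable hm)).add (integrable_const _)) ?_
  filter_upwards [ae_lt_top hp_meas hp, ae_lt_top hm_meas hm] with t hpt hmt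
  exact rateIntegrand_le (a t) (hwp t) (hwm t) hpt.ne hmt.ne

lemma exists_le_integral_rateIntegrand (hs_meas : Measurable s) (hs : Integrable s μ)
    (hwp_meas : Measurable wp) (hwm_meas : Measurable wm) (hwp : ∀ t, wp t ∈ Icc 0 M)
    (hwm : ∀ t, wm t ∈ Icc 0 M)
    (htop : ∫⁻ t, (jumpCost (s t) (wp t) + jumpCost (-s t) (wm t)) ∂μ = ⊤) (C : ℝ) :
    ∃ a : α → ℝ, Measurable a ∧ (∃ K, ∀ t, |a t| ≤ K) ∧
      C ≤ ∫ t, rateIntegrand (a t) (s t) (wp t) (wm t) ∂μ := by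
  set g : ℕ → α → ℝ := fun n t => tilt n (s t) (wp t) * s t + tilt n (-s t) (wm t) * (-s t)
  have htilt_mul : ∀ n {σ w : α → ℝ}, Integrable σ μ → Measurable σ → Measurable w →
      Integrable (fun t => tilt n (σ t) (w t) * σ t) μ := fun n _ _ hσ hσ_meas hw_meas =>
    hσ.bdd_mul (hσ_meas.tilt n hw_meas).aestronglyMeasurable (ae_of_all _ fun t => by
      simpa [abs_of_nonneg (tilt_nonneg _ _ _)] using tilt_le n _ _)
  have hg : ∀ n, Integrable (g n) μ := fun n =>
    (htilt_mul n hs hs_meas hwp_meas).add (htilt_mul n hs.neg hs_meas.neg hwm_meas)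
  have hloss : Integrable (fun t => (1 + M) * (1 + |s t|)) μ :=
    ((integrable_const 1).add hs.abs).const_mul (1 + M)
  have hsup : ∀ t,
      ⨆ n, ENNReal.ofReal (g n t) = jumpCost (s t) (wp t) + jumpCost (-s t) (wm t) := by
    intro t
    rw [← iSup_ofReal_tilt_mul_self, ← iSup_ofReal_tilt_mul_self,
      ENNReal.iSup_add_iSup_of_monotone (fun _ _ h => ENNReal.ofReal_le_ofReal
        (monotone_tilt_mul_self _ _ h)) (fun _ _ h => ENNReal.ofReal_le_ofReal
        (monotone_tilt_mul_self _ _ h))]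
    simp only [g, ENNReal.ofReal_add (tilt_mul_self_nonneg _ _ _) (tilt_mul_self_nonneg _ _ _)]
  obtain ⟨n, hn⟩ := exists_le_integral_of_lintegral_iSup_eq_top hg
    (fun n => ae_of_all _ fun t => add_nonneg (tilt_mul_self_nonneg _ _ _)
      (tilt_mul_self_nonneg _ _ _))
    (ae_of_all _ fun t => (monotone_tilt_mul_self _ _).add (monotone_tilt_mul_self _ _))
    (by simp_rw [hsup]; exact htop) (C + ∫ t, (1 + M) * (1 + |s t|) ∂μ)
  set a : α → ℝ := fun t => tilt n (s t) (wp t) - tilt n (-s t) (wm t)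
  have ha_meas : Measurable a := (hs_meas.tilt n hwp_meas).sub (hs_meas.neg.tilt n hwm_meas)
  have ha_bdd : ∀ t, |a t| ≤ n := fun t => abs_sub_le_of_nonneg_of_le (tilt_nonneg _ _ _)
    (tilt_le _ _ _) (tilt_nonneg _ _ _) (tilt_le _ _ _)
  refine ⟨a, ha_meas, ⟨n, ha_bdd⟩, ?_⟩
  calc C ≤ ∫ t, g n t ∂μ - ∫ t, (1 + M) * (1 + |s t|) ∂μ := by linarith
    _ = ∫ t, (g n t - (1 + M) * (1 + |s t|)) ∂μ := (integral_sub (hg n) hloss).symm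
    _ ≤ _ := integral_mono ((hg n).sub hloss)
        (integrable_rateIntegrand hs hwp_meas hwm_meas hwp hwm ha_meas ha_bdd)
        fun t => sub_le_rateIntegrand_tilt_sub_tilt n (s t) (hwp t) (hwm t)

end RateIntegral

lemma le_irate {T : ℝ} {x' wp wm a : ℝ → ℝ} (ha : Measurable a) (hK : ∃ K, ∀ t, |a t| ≤ K) :
    (Frate T x' wp wm a : EReal) ≤ Irate T x' wp wm :=
  le_sSup ⟨a, ha, hK, rfl⟩

lemma irate_ne_top_iff {T M : ℝ} {x' wp wm : ℝ → ℝ} (hx'meas : Measurable x')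
    (hx'int : IntegrableOn x' (Ioc 0 T)) (hwpmeas : Measurable wp) (hwmmeas : Measurable wm)
    (hwp : ∀ t, wp t ∈ Icc 0 M) (hwm : ∀ t, wm t ∈ Icc 0 M) :
    Irate T x' wp wm ≠ ⊤ ↔
      ∫⁻ t in Ioc 0 T, (jumpCost (x' t) (wp t) + jumpCost (-x' t) (wm t)) ≠ ⊤ := by
  constructor
  · intro hI htop
    refine hI ((EReal.eq_top_iff_forall_lt _).2 fun C => ?_)
    obtain ⟨a, ha, hK, hC⟩ :=
      exists_le_integral_rateIntegrand hx'meas hx'int hwpmeas hwmmeas hwp hwm htop (C + 1)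
    exact (EReal.coe_lt_coe_iff.2 (by linarith)).trans_le
      ((EReal.coe_le_coe_iff.2 hC).trans (le_irate ha hK))
  · intro hfin
    rw [lintegral_add_left (hx'meas.jumpCost hwpmeas)] at hfin
    obtain ⟨hp, hm⟩ := ENNReal.add_ne_top.1 hfin
    refine ne_top_of_le_ne_top (EReal.coe_ne_top (∫ t in Ioc 0 T,
      ((jumpCost (x' t) (wp t)).toReal + (jumpCost (-x' t) (wm t)).toReal + 2 * M))) (sSup_le ?_)
    rintro _ ⟨a, ha, ⟨K, hK⟩, rfl⟩
    exact EReal.coe_le_coe_iff.2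
      (integral_rateIntegrand_le hx'meas hx'int hwpmeas hwmmeas hwp hwm hp hm ha hK)

theorem rw_rate_finiteness_general (T M : ℝ)
    (x' : ℝ → ℝ) (hx'meas : Measurable x') (hx'int : IntegrableOn x' (Set.Ioc 0 T))
    (wp wm : ℝ → ℝ) (hwpmeas : Measurable wp) (hwmmeas : Measurable wm)
    (hwp : ∀ t, wp t ∈ Set.Icc (0 : ℝ) M) (hwm : ∀ t, wm t ∈ Set.Icc (0 : ℝ) M) :
    Irate T x' wp wm ≠ ⊤ ↔
      ((∫⁻ t in Set.Ioc 0 T,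
          ENNReal.ofReal (|x' t| * max (Real.log |x' t|) 0)) ≠ ⊤ ∧
       (∫⁻ t in Set.Ioc 0 T,
          ENNReal.ofReal (max (x' t) 0) * plogInv (wp t)) ≠ ⊤ ∧
       (∫⁻ t in Set.Ioc 0 T,
          ENNReal.ofReal (max (-x' t) 0) * plogInv (wm t)) ≠ ⊤) := by
  have hA : Measurable fun t => ENNReal.ofReal (|x' t| * max (Real.log |x' t|) 0) :=
    (hx'meas.abs.mul (hx'meas.abs.log.max measurable_const)).ennreal_ofReal
  have hB : Measurable fun t => ENNReal.ofReal (max (x' t) 0) * plogInv (wp t) :=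
    (hx'meas.max measurable_const).ennreal_ofReal.mul (measurable_plogInv.comp hwpmeas)
  have hAB : Measurable fun t => ENNReal.ofReal (|x' t| * max (Real.log |x' t|) 0)
      + ENNReal.ofReal (max (x' t) 0) * plogInv (wp t) := hA.add hB
  rw [irate_ne_top_iff hx'meas hx'int hwpmeas hwmmeas hwp hwm, ← and_assoc, ← ENNReal.add_ne_top,
    ← ENNReal.add_ne_top, ← lintegral_add_left hA, ← lintegral_add_left hAB]
  simp_rw [ofReal_abs_mul_log_add_eq_jumpCost]

/-- **Finiteness of the random-walk rate function.** `I` is finite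
if and only if `∫₀ᵀ |x'| log⁺|x'|`, `∫₀ᵀ (x')⁺ log⁺(1/w⁺)` and
`∫₀ᵀ (x')⁻ log⁺(1/w⁻)` are all finite. -/
theorem rw_rate_finiteness (T M : ℝ) (hT : 0 < T) (hM : 0 < M)
    (x x' : ℝ → ℝ) (hx'meas : Measurable x') (hx'int : IntegrableOn x' (Set.Ioc 0 T))
    (hAC : ∀ t ∈ Set.Icc 0 T, x t = x 0 + ∫ s in (0 : ℝ)..t, x' s)
    (wp wm : ℝ → ℝ) (hwpmeas : Measurable wp) (hwmmeas : Measurable wm)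
    (hwp : ∀ t, wp t ∈ Set.Icc (0 : ℝ) M) (hwm : ∀ t, wm t ∈ Set.Icc (0 : ℝ) M) :
    Irate T x' wp wm ≠ ⊤ ↔
      ((∫⁻ t in Set.Ioc 0 T,
          ENNReal.ofReal (|x' t| * max (Real.log |x' t|) 0)) ≠ ⊤ ∧
       (∫⁻ t in Set.Ioc 0 T,
          ENNReal.ofReal (max (x' t) 0) * plogInv (wp t)) ≠ ⊤ ∧
       (∫⁻ t in Set.Ioc 0 T,
          ENNReal.ofReal (max (-x' t) 0) * plogInv (wm t)) ≠ ⊤) :=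
  rw_rate_finiteness_general T M x' hx'meas hx'int wp wm hwpmeas hwmmeas hwp hwm

end
end

section
/- Explicit form of the random-walk rate function (nondegenerate case). Assume in addition that w⁺(t)·w⁻(t) > 0 for almost every t ∈ [0,T], and set â(t) := log( (x'(t) + √(x'(t)² + 4w⁺(t)w⁻(t))) / (2w⁺(t)) ). Then I = ∫₀ᵀ ( x'(t)·â(t) + w⁺(t) + w⁻(t) − √(x'(t)² + 4w⁺(t)w⁻(t)) ) dt, as an equality of values in [0, +∞]. -/
/-!
Pointwise, `a ↦ a v - p (eᵃ - 1) - m (e⁻ᵃ - 1)` is concave with critical point `â`, where it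
takes the value `v â + p + m - √(v² + 4pm)`; integrating this bound gives `I ≤ ∫ …`.
Conversely, the truncations `max (-n) (min n â)` are admissible and lie between `0` and `â`,
where the concave integrand is at least its value `0` at `a = 0`; they converge to `â`, so
Fatou's lemma gives `∫ … ≤ I`, whether or not the right-hand side is finite.
-/

open MeasureTheory
open scoped ENNReal

noncomputable section

/-- The pointwise maximizer
`â(t) = log((x'(t) + √(x'(t)² + 4w⁺(t)w⁻(t))) / (2w⁺(t)))`. -/
def ahat (x' wp wm : ℝ → ℝ) (t : ℝ) : ℝ :=
  Real.log ((x' t + Real.sqrt ((x' t) ^ 2 + 4 * wp t * wm t)) / (2 * wp t))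

open Real Set Filter Topology

-- `a v` minus the cumulant generating function of a Skellam(p, m) variable, so that
-- `skellamRate v p m = sup_a skellamGain v p m a` is its Legendre transform at `v`.
def skellamGain (v p m a : ℝ) : ℝ :=
  a * v - p * (exp a - 1) - m * (exp (-a) - 1)

def skellamTilt (v p m : ℝ) : ℝ :=
  log ((v + √(v ^ 2 + 4 * p * m)) / (2 * p))

def skellamRate (v p m : ℝ) : ℝ :=
  v * skellamTilt v p m + p + m - √(v ^ 2 + 4 * p * m)

section Pointwise

variable {v p m : ℝ}

theorem concaveOn_skellamGain (hp : 0 ≤ p) (hm : 0 ≤ m) :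
    ConcaveOn ℝ univ (skellamGain v p m) := by
  refine ⟨convex_univ, fun a _ b _ α β hα hβ hαβ => ?_⟩
  have hexp := convexOn_exp.2 (mem_univ a) (mem_univ b) hα hβ hαβ
  have hexp_neg := convexOn_exp.2 (mem_univ (-a)) (mem_univ (-b)) hα hβ hαβ
  simp only [smul_eq_mul, skellamGain] at *
  rw [show -(α * a + β * b) = α * -a + β * -b by ring]
  nlinarith [mul_le_mul_of_nonneg_left hexp hp, mul_le_mul_of_nonneg_left hexp_neg hm]

-- `hb` says that the derivative of `skellamGain v p m` vanishes at `b`.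
theorem skellamGain_le_of_critical (hp : 0 ≤ p) (hm : 0 ≤ m) {b : ℝ}
    (hb : p * exp b - m * exp (-b) = v) (a : ℝ) :
    skellamGain v p m a ≤ skellamGain v p m b := by
  have tangent : ∀ x y : ℝ, exp y * (x - y + 1) ≤ exp x := fun x y => by
    simpa [← exp_add] using mul_le_mul_of_nonneg_left (add_one_le_exp (x - y)) (exp_pos y).le
  subst hb
  unfold skellamGain
  nlinarith [mul_le_mul_of_nonneg_left (tangent a b) hp,
    mul_le_mul_of_nonneg_left (tangent (-a) (-b)) hm]

theorem continuous_skellamGain : Continuous (skellamGain v p m) := by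
  unfold skellamGain
  fun_prop

theorem skellamGain_zero : skellamGain v p m 0 = 0 := by
  simp [skellamGain]

theorem mul_exp_skellamTilt (hp : 0 < p) (hm : 0 < m) :
    p * exp (skellamTilt v p m) = (v + √(v ^ 2 + 4 * p * m)) / 2 ∧
      m * exp (-skellamTilt v p m) = (√(v ^ 2 + 4 * p * m) - v) / 2 := by
  set s := √(v ^ 2 + 4 * p * m)
  have hs : s ^ 2 = v ^ 2 + 4 * p * m := sq_sqrt (by positivity)
  have hvs : 0 < v + s := by nlinarith [sqrt_nonneg (v ^ 2 + 4 * p * m), mul_pos hp hm]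
  have hexp : exp (skellamTilt v p m) = (v + s) / (2 * p) := exp_log (by positivity)
  rw [exp_neg, hexp]
  constructor
  · field_simp
  · field_simp
    nlinarith

theorem skellamGain_skellamTilt (hp : 0 < p) (hm : 0 < m) :
    skellamGain v p m (skellamTilt v p m) = skellamRate v p m := by
  obtain ⟨h₁, h₂⟩ := mul_exp_skellamTilt (v := v) hp hm
  unfold skellamGain skellamRate
  linarith

theorem skellamGain_le_skellamRate (hp : 0 < p) (hm : 0 < m) (a : ℝ) :
    skellamGain v p m a ≤ skellamRate v p m := by
  obtain ⟨h₁, h₂⟩ := mul_exp_skellamTilt (v := v) hp hm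
  rw [← skellamGain_skellamTilt hp hm]
  exact skellamGain_le_of_critical hp.le hm.le (by linarith) a

theorem skellamGain_nonneg_of_mem_uIcc (hp : 0 < p) (hm : 0 < m) {a : ℝ}
    (ha : a ∈ uIcc 0 (skellamTilt v p m)) : 0 ≤ skellamGain v p m a := by
  have h0 : skellamGain v p m 0 ≤ skellamGain v p m (skellamTilt v p m) := by
    rw [skellamGain_skellamTilt hp hm]
    exact skellamGain_le_skellamRate hp hm 0
  have hmin := (concaveOn_skellamGain (v := v) hp.le hm.le).min_le_of_mem_segment
    (mem_univ 0) (mem_univ _) (segment_eq_uIcc (0 : ℝ) _ ▸ ha)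
  rwa [min_eq_left h0, skellamGain_zero] at hmin

end Pointwise

section Integrals

variable {α : Type*} [MeasurableSpace α] {μ : Measure α}

theorem ofReal_integral_le_lintegral_ofReal {f : α → ℝ} (hf : Integrable f μ) :
    ENNReal.ofReal (∫ x, f x ∂μ) ≤ ∫⁻ x, ENNReal.ofReal (f x) ∂μ := by
  refine (ENNReal.ofReal_le_ofReal ?_).trans ENNReal.ofReal_toReal_le
  rw [integral_eq_lintegral_pos_part_sub_lintegral_neg_part hf]
  linarith [ENNReal.toReal_nonneg (a := ∫⁻ x, ENNReal.ofReal (-f x) ∂μ)]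

theorem coe_integral_le_coe_lintegral_ofReal {f g : α → ℝ} (hf : Integrable f μ)
    (hfg : f ≤ᵐ[μ] g) :
    ((∫ x, f x ∂μ : ℝ) : EReal) ≤ ((∫⁻ x, ENNReal.ofReal (g x) ∂μ : ℝ≥0∞) : EReal) := by
  calc ((∫ x, f x ∂μ : ℝ) : EReal)
      ≤ ((ENNReal.ofReal (∫ x, f x ∂μ) : ℝ≥0∞) : EReal) := by
        rw [EReal.coe_ennreal_ofReal]
        exact EReal.coe_le_coe_iff.mpr (le_max_left _ _)
    _ ≤ _ := EReal.coe_ennreal_le_coe_ennreal_iff.mpr <|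
        (ofReal_integral_le_lintegral_ofReal hf).trans <|
          lintegral_mono_ae <| hfg.mono fun _ h => ENNReal.ofReal_le_ofReal h

-- Fatou's lemma; `g` need not be integrable, so `∫⁻ x, ENNReal.ofReal (g x) ∂μ = ∞` is allowed.
theorem coe_lintegral_ofReal_le_iSup_coe_integral {f : ℕ → α → ℝ} {g : α → ℝ}
    (hf : ∀ n, Integrable (f n) μ) (hf_nonneg : ∀ n, 0 ≤ᵐ[μ] f n)
    (hlim : ∀ᵐ x ∂μ, Tendsto (fun n => f n x) atTop (𝓝 (g x))) :
    ((∫⁻ x, ENNReal.ofReal (g x) ∂μ : ℝ≥0∞) : EReal) ≤ ⨆ n, ((∫ x, f n x ∂μ : ℝ) : EReal) := by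
  have hfatou : ∫⁻ x, ENNReal.ofReal (g x) ∂μ ≤ ⨆ n, ∫⁻ x, ENNReal.ofReal (f n x) ∂μ :=
    calc ∫⁻ x, ENNReal.ofReal (g x) ∂μ
        = ∫⁻ x, liminf (fun n => ENNReal.ofReal (f n x)) atTop ∂μ :=
          lintegral_congr_ae <| hlim.mono fun _ h =>
            ((ENNReal.continuous_ofReal.tendsto _).comp h).liminf_eq.symm
      _ ≤ liminf (fun n => ∫⁻ x, ENNReal.ofReal (f n x) ∂μ) atTop :=
          lintegral_liminf_le' fun n => (hf n).aemeasurable.ennreal_ofReal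
      _ ≤ ⨆ n, ∫⁻ x, ENNReal.ofReal (f n x) ∂μ := le_trans liminf_le_limsup limsup_le_iSup
  have hterm (n : ℕ) :
      ((∫⁻ x, ENNReal.ofReal (f n x) ∂μ : ℝ≥0∞) : EReal) = ((∫ x, f n x ∂μ : ℝ) : EReal) := by
    rw [← ofReal_integral_eq_lintegral_ofReal (hf n) (hf_nonneg n), EReal.coe_ennreal_ofReal,
      max_eq_left (integral_nonneg_of_ae (hf_nonneg n))]
  calc ((∫⁻ x, ENNReal.ofReal (g x) ∂μ : ℝ≥0∞) : EReal)
      ≤ (((⨆ n, ∫⁻ x, ENNReal.ofReal (f n x) ∂μ) : ℝ≥0∞) : EReal) :=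
        EReal.coe_ennreal_le_coe_ennreal_iff.mpr hfatou
    _ = ⨆ n, ((∫ x, f n x ∂μ : ℝ) : EReal) := by
        rw [Monotone.map_ciSup_of_continuousAt continuous_coe_ennreal_ereal.continuousAt
          EReal.coe_ennreal_strictMono.monotone]
        simp only [hterm]

theorem integrable_skellamGain [IsFiniteMeasure μ] {v p m a : α → ℝ} {M K : ℝ}
    (hv : Integrable v μ) (hp : Measurable p) (hm : Measurable m) (ha : Measurable a)
    (hpM : ∀ x, |p x| ≤ M) (hmM : ∀ x, |m x| ≤ M) (haK : ∀ x, |a x| ≤ K) :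
    Integrable (fun x => skellamGain (v x) (p x) (m x) (a x)) μ := by
  have hexp_sub_one {b : ℝ} (hb : |b| ≤ K) : |exp b - 1| ≤ exp K + 1 := by
    have := exp_le_exp.mpr (abs_le.mp hb).2
    rw [abs_le]; constructor <;> linarith [exp_pos b]
  have hbound {w : α → ℝ} {b : α → ℝ} (hw : Measurable w) (hb : Measurable b)
      (hwM : ∀ x, |w x| ≤ M) (hbK : ∀ x, |b x| ≤ K) :
      Integrable (fun x => w x * (exp (b x) - 1)) μ :=
    .of_bound (by fun_prop) (M * (exp K + 1)) <| ae_of_all _ fun x => by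
      rw [norm_mul]
      exact mul_le_mul (hwM x) (hexp_sub_one (hbK x)) (norm_nonneg _)
        ((abs_nonneg _).trans (hwM x))
  exact ((hv.bdd_mul ha.aestronglyMeasurable (ae_of_all _ haK)).sub (hbound hp ha hpM haK)).sub
    (hbound hm ha.neg hmM fun x => (abs_neg (a x)).trans_le (haK x))

end Integrals

section Truncation

variable {r : ℝ}

theorem abs_max_neg_min_le (hr : 0 ≤ r) (b : ℝ) : |max (-r) (min r b)| ≤ r :=
  abs_le.mpr ⟨le_max_left _ _, max_le (by linarith) (min_le_left _ _)⟩

theorem max_neg_min_mem_uIcc (hr : 0 ≤ r) (b : ℝ) : max (-r) (min r b) ∈ uIcc 0 b := by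
  rcases le_total 0 b with hb | hb
  · rw [uIcc_of_le hb, max_eq_right ((neg_nonpos.mpr hr).trans (le_min hr hb))]
    exact ⟨le_min hr hb, min_le_right _ _⟩
  · rw [uIcc_of_ge hb, min_eq_right (by linarith)]
    exact ⟨le_max_right _ _, max_le (by linarith) hb⟩

theorem max_neg_min_of_abs_le {b : ℝ} (h : |b| ≤ r) : max (-r) (min r b) = b := by
  rw [min_eq_right (abs_le.mp h).2, max_eq_right (abs_le.mp h).1]

theorem tendsto_max_neg_min (b : ℝ) :
    Tendsto (fun n : ℕ => max (-(n : ℝ)) (min (n : ℝ) b)) atTop (𝓝 b) :=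
  tendsto_nhds_of_eventually_eq <| (eventually_ge_atTop ⌈|b|⌉₊).mono fun _ hn =>
    max_neg_min_of_abs_le (Nat.ceil_le.mp hn)

end Truncation

theorem rw_rate_explicit_general (T M : ℝ)
    (x' : ℝ → ℝ) (hx'meas : Measurable x') (hx'int : IntegrableOn x' (Set.Ioc 0 T))
    (wp wm : ℝ → ℝ) (hwpmeas : Measurable wp) (hwmmeas : Measurable wm)
    (hwp : ∀ t, wp t ∈ Set.Icc (0 : ℝ) M) (hwm : ∀ t, wm t ∈ Set.Icc (0 : ℝ) M)
    (hpos : ∀ᵐ t ∂(volume.restrict (Set.Ioc 0 T)), 0 < wp t * wm t) :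
    Irate T x' wp wm =
      (((∫⁻ t in Set.Ioc 0 T,
          ENNReal.ofReal (x' t * ahat x' wp wm t + wp t + wm t
            - Real.sqrt ((x' t) ^ 2 + 4 * wp t * wm t))) : ℝ≥0∞) : EReal) := by
  change Irate T x' wp wm =
    ((∫⁻ t in Ioc 0 T, ENNReal.ofReal (skellamRate (x' t) (wp t) (wm t)) : ℝ≥0∞) : EReal)
  have hw_pos : ∀ᵐ t ∂(volume.restrict (Ioc 0 T)), 0 < wp t ∧ 0 < wm t :=
    hpos.mono fun t ht => (pos_and_pos_or_neg_and_neg_of_mul_pos ht).resolve_right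
      fun hneg => (hwp t).1.not_gt hneg.1
  have hgain_int {a : ℝ → ℝ} (ha : Measurable a) {K : ℝ} (hK : ∀ t, |a t| ≤ K) :=
    integrable_skellamGain (μ := volume.restrict (Ioc 0 T)) hx'int hwpmeas hwmmeas ha
      (fun t => (abs_of_nonneg (hwp t).1).trans_le (hwp t).2)
      (fun t => (abs_of_nonneg (hwm t).1).trans_le (hwm t).2) hK
  refine le_antisymm (sSup_le ?_) ?_
  · rintro _ ⟨a, ha, ⟨K, hK⟩, rfl⟩
    exact coe_integral_le_coe_lintegral_ofReal (hgain_int ha hK) <|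
      hw_pos.mono fun t ht => skellamGain_le_skellamRate ht.1 ht.2 (a t)
  set a : ℕ → ℝ → ℝ := fun n t => max (-(n : ℝ)) (min n (ahat x' wp wm t))
  have ha_meas (n : ℕ) : Measurable (a n) := by
    unfold a ahat; fun_prop
  have ha_bdd (n : ℕ) (t : ℝ) : |a n t| ≤ n := abs_max_neg_min_le n.cast_nonneg _
  calc _ ≤ ⨆ n, ((Frate T x' wp wm (a n) : ℝ) : EReal) :=
        coe_lintegral_ofReal_le_iSup_coe_integral (fun n => hgain_int (ha_meas n) (ha_bdd n))
          (fun n => hw_pos.mono fun t ht => skellamGain_nonneg_of_mem_uIcc ht.1 ht.2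
            (max_neg_min_mem_uIcc n.cast_nonneg _))
          (hw_pos.mono fun t ht => skellamGain_skellamTilt ht.1 ht.2 ▸
            (continuous_skellamGain.tendsto _).comp (tendsto_max_neg_min _))
    _ ≤ Irate T x' wp wm := iSup_le fun n => le_sSup ⟨a n, ha_meas n, ⟨n, ha_bdd n⟩, rfl⟩

/-- **Explicit form of the random-walk rate function,
nondegenerate case.** If `w⁺w⁻ > 0` a.e., then
`I = ∫₀ᵀ ( x'·â + w⁺ + w⁻ − √(x'² + 4w⁺w⁻) ) dt` as values in `[0, +∞]`. -/
theorem rw_rate_explicit (T M : ℝ) (hT : 0 < T) (hM : 0 < M)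
    (x x' : ℝ → ℝ) (hx'meas : Measurable x') (hx'int : IntegrableOn x' (Set.Ioc 0 T))
    (hAC : ∀ t ∈ Set.Icc 0 T, x t = x 0 + ∫ s in (0 : ℝ)..t, x' s)
    (wp wm : ℝ → ℝ) (hwpmeas : Measurable wp) (hwmmeas : Measurable wm)
    (hwp : ∀ t, wp t ∈ Set.Icc (0 : ℝ) M) (hwm : ∀ t, wm t ∈ Set.Icc (0 : ℝ) M)
    (hpos : ∀ᵐ t ∂(volume.restrict (Set.Ioc 0 T)), 0 < wp t * wm t) :
    Irate T x' wp wm =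
      (((∫⁻ t in Set.Ioc 0 T,
          ENNReal.ofReal (x' t * ahat x' wp wm t + wp t + wm t
            - Real.sqrt ((x' t) ^ 2 + 4 * wp t * wm t))) : ℝ≥0∞) : EReal) :=
  rw_rate_explicit_general T M x' hx'meas hx'int wp wm hwpmeas hwmmeas hwp hwm hpos

end
end

section
/- If the path is not absolutely continuous, the random-walk rate function is infinite. Let μ be a finite signed Borel measure on [0,T] which is not absolutely continuous with respect to Lebesgue measure, and let w⁺, w⁻: [0,T] → [0,M] be Borel measurable. Then sup over a ∈ C¹([0,T]) of { ∫₀ᵀ a(t) dμ(t) − ∫₀ᵀ ( w⁺(t)(e^{a(t)} − 1) + w⁻(t)(e^{−a(t)} − 1) ) dt } = +∞. -/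
open MeasureTheory Manifold Set

noncomputable section

/-!
By the Jordan decomposition and inner regularity, one of `μ⁺`, `μ⁻` (say `μ⁺`) charges a closed
Lebesgue-null set `K` not charged by the other. Take `a = L f` with `f` a `C¹` bump equal to `1`
on `K` and vanishing off an open `U ⊇ K` with `μ⁻ U ≤ μ⁺ K / 2` and `Leb U ≤ exp (-L)`. Then
`∫ a dμ ≥ L μ⁺ K / 2`, while the penalty vanishes off `U` and is at most `M exp L` on `U`, so it
contributes at most `M`. Letting `L → ∞` gives `+∞`. If instead `μ⁻` charges `K`, use `-a`,
which exchanges the roles of `w⁺` and `w⁻`.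
-/

theorem exists_contDiff_zero_one_of_isClosed_subset_isOpen {E : Type*} [NormedAddCommGroup E]
    [NormedSpace ℝ E] [FiniteDimensional ℝ E] {n : ℕ∞} {K U : Set E} (hK : IsClosed K)
    (hU : IsOpen U) (hKU : K ⊆ U) :
    ∃ f : E → ℝ, ContDiff ℝ n f ∧ (∀ x, f x ∈ Icc 0 1) ∧ EqOn f 1 K ∧ ∀ x ∉ U, f x = 0 := by
  obtain ⟨f, hf0, hf1, hf01⟩ := exists_contMDiffMap_zero_one_of_isClosed 𝓘(ℝ, E) (n := n)
    hU.isClosed_compl hK (disjoint_compl_left_iff.mpr hKU)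
  exact ⟨f, contMDiff_iff_contDiff.mp f.contMDiff, hf01, hf1, fun x hx => hf0 hx⟩

section Integral

variable {α : Type*} [MeasurableSpace α] {μ : Measure α} {f : α → ℝ} {s : Set α} {c : ℝ}

theorem integral_le_mul_measureReal_of_le_indicator (hs : MeasurableSet s) (hμs : μ s ≠ ⊤)
    (hc : 0 ≤ c) (hf : ∀ x, f x ≤ s.indicator (fun _ => c) x) :
    ∫ x, f x ∂μ ≤ c * μ.real s := by
  by_cases hfi : Integrable f μ
  · calc ∫ x, f x ∂μ ≤ ∫ x, s.indicator (fun _ => c) x ∂μ :=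
          integral_mono hfi ((integrableOn_const hμs).integrable_indicator hs) hf
      _ = c * μ.real s := by rw [integral_indicator_const c hs, smul_eq_mul, mul_comm]
  · rw [integral_undef hfi]
    positivity

theorem mul_measureReal_le_integral_of_indicator_le (hs : MeasurableSet s) (hc : 0 ≤ c)
    (hfi : Integrable f μ) (hf : ∀ x, s.indicator (fun _ => c) x ≤ f x) :
    c * μ.real s ≤ ∫ x, f x ∂μ := by
  calc c * μ.real s = ∫ x, s.indicator (fun _ => c) x ∂μ := by
        rw [integral_indicator_const c hs, smul_eq_mul, mul_comm]
    _ ≤ ∫ x, f x ∂μ :=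
        integral_mono_of_nonneg (.of_forall (indicator_nonneg fun _ _ => hc)) hfi (.of_forall hf)

end Integral

theorem MeasureTheory.Measure.MutuallySingular.exists_isClosed_subset_pos_null {α : Type*}
    [MeasurableSpace α] [TopologicalSpace α] {p q : Measure α} [p.WeaklyRegular] [IsFiniteMeasure p]
    (hpq : p ⟂ₘ q) {s : Set α} (hs : MeasurableSet s) (hps : 0 < p s) :
    ∃ K ⊆ s, IsClosed K ∧ 0 < p K ∧ q K = 0 := by
  obtain ⟨u, hu, hpu, hqu⟩ := hpq
  have hps' : 0 < p (s \ u) := by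
    rwa [← measure_inter_add_sdiff s hu, measure_mono_null inter_subset_right hpu, zero_add] at hps
  obtain ⟨K, hKs, hK, hpK⟩ := (hs.diff hu).exists_lt_isClosed_of_ne_top (measure_ne_top p _) hps'
  exact ⟨K, hKs.trans sdiff_subset, hK, hpK,
    measure_mono_null (hKs.trans fun x hx => hx.2) hqu⟩

theorem MeasureTheory.SignedMeasure.pos_posPart_or_pos_negPart {α : Type*} [MeasurableSpace α]
    (μ : SignedMeasure α) {s : Set α} (hμs : μ s ≠ 0) :
    0 < μ.toJordanDecomposition.posPart s ∨ 0 < μ.toJordanDecomposition.negPart s := by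
  by_contra! h
  exact hμs (μ.null_of_totalVariation_zero (by
    simp [SignedMeasure.totalVariation, le_zero_iff.mp h.1, le_zero_iff.mp h.2]))

def ratePenalty {α : Type*} (wp wm a : α → ℝ) (t : α) : ℝ :=
  wp t * (Real.exp (a t) - 1) + wm t * (Real.exp (-a t) - 1)

/-- The paper's functional for `μ = p - q`, with `ν` in place of Lebesgue measure on `(0, T]`. -/
def rateObjective {α : Type*} [MeasurableSpace α] (p q ν : Measure α) (wp wm a : α → ℝ) : ℝ :=
  ∫ t, a t ∂p - ∫ t, a t ∂q - ∫ t, ratePenalty wp wm a t ∂ν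

theorem rateObjective_neg {α : Type*} [MeasurableSpace α] (p q ν : Measure α)
    (wp wm a : α → ℝ) :
    rateObjective p q ν wp wm (-a) = rateObjective q p ν wm wp a := by
  have : ratePenalty wp wm (-a) = ratePenalty wm wp a := by
    ext t; simp only [ratePenalty, Pi.neg_apply, neg_neg]; ring
  simp only [rateObjective, this, Pi.neg_apply, integral_neg]
  ring

theorem ratePenalty_le_indicator {α : Type*} {wp wm a : α → ℝ} {U : Set α} {M L : ℝ} (t : α)
    (hM : 0 ≤ M) (hwp : wp t ≤ M) (hwm : 0 ≤ wm t) (ha : a t ∈ Icc 0 L) (haU : t ∉ U → a t = 0) :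
    ratePenalty wp wm a t ≤ U.indicator (fun _ => M * Real.exp L) t := by
  by_cases htU : t ∈ U
  · have hexp : 0 ≤ Real.exp (a t) - 1 := sub_nonneg.mpr (Real.one_le_exp ha.1)
    have hplus : wp t * (Real.exp (a t) - 1) ≤ M * Real.exp L :=
      calc wp t * (Real.exp (a t) - 1) ≤ M * (Real.exp (a t) - 1) :=
            mul_le_mul_of_nonneg_right hwp hexp
        _ ≤ M * Real.exp L := by gcongr; linarith [Real.exp_le_exp.mpr ha.2]
    have hminus : wm t * (Real.exp (-a t) - 1) ≤ 0 :=
      mul_nonpos_of_nonneg_of_nonpos hwm (by simpa using ha.1)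
    rw [indicator_of_mem htU, ratePenalty]
    linarith
  · simp [ratePenalty, indicator_of_notMem htU, haU htU]

section TestFunction

variable {E : Type*} [NormedAddCommGroup E] [NormedSpace ℝ E] [FiniteDimensional ℝ E]
  [MeasurableSpace E] [BorelSpace E] {p q ν : Measure E} [IsFiniteMeasure p] [IsFiniteMeasure q]
  {wp wm : E → ℝ} {M : ℝ}

theorem exists_contDiff_le_rateObjective {K U : Set E} (hK : IsClosed K) (hU : IsOpen U)
    (hKU : K ⊆ U) (hνU : ν U ≠ ⊤) (hM : 0 ≤ M) (hwp : ∀ t, wp t ≤ M) (hwm : ∀ t, 0 ≤ wm t)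
    {L : ℝ} (hL : 0 ≤ L) :
    ∃ a : E → ℝ, ContDiff ℝ 1 a ∧
      L * p.real K - L * q.real U - M * Real.exp L * ν.real U ≤ rateObjective p q ν wp wm a := by
  obtain ⟨f, hf, hf01, hfK, hfU⟩ :=
    exists_contDiff_zero_one_of_isClosed_subset_isOpen (n := 1) hK hU hKU
  set a : E → ℝ := fun t => L * f t
  have ha : ∀ t, a t ∈ Icc 0 L := fun t =>
    ⟨mul_nonneg hL (hf01 t).1, mul_le_of_le_one_right hL (hf01 t).2⟩
  have haU : ∀ t ∉ U, a t = 0 := fun t ht => by simp [a, hfU t ht]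
  have hle : ∀ t, a t ≤ U.indicator (fun _ => L) t := fun t => by
    by_cases ht : t ∈ U
    · simpa [indicator_of_mem ht] using (ha t).2
    · simp [indicator_of_notMem ht, haU t ht]
  have hge : ∀ t, K.indicator (fun _ => L) t ≤ a t := fun t => by
    by_cases ht : t ∈ K
    · simp [indicator_of_mem ht, a, hfK ht]
    · simpa [indicator_of_notMem ht] using (ha t).1
  have hai : Integrable a p := .of_bound (contDiff_const.mul hf).continuous.aestronglyMeasurable L
    (.of_forall fun t => by rw [Real.norm_of_nonneg (ha t).1]; exact (ha t).2)
  refine ⟨a, contDiff_const.mul hf, ?_⟩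
  have hp := mul_measureReal_le_integral_of_indicator_le hK.measurableSet hL hai hge
  have hq :=
    integral_le_mul_measureReal_of_le_indicator hU.measurableSet (measure_ne_top q U) hL hle
  have hν := integral_le_mul_measureReal_of_le_indicator hU.measurableSet hνU (by positivity)
    fun t => ratePenalty_le_indicator t hM (hwp t) (hwm t) (ha t) (haU t)
  unfold rateObjective
  linarith

theorem exists_contDiff_lt_rateObjective [ν.OuterRegular] {K : Set E} (hK : IsClosed K)
    (hpK : 0 < p K) (hqK : q K = 0) (hνK : ν K = 0) (hM : 0 ≤ M) (hwp : ∀ t, wp t ≤ M)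
    (hwm : ∀ t, 0 ≤ wm t) (C : ℝ) :
    ∃ a : E → ℝ, ContDiff ℝ 1 a ∧ C < rateObjective p q ν wp wm a := by
  set c := p.real K
  have hc : 0 < c := ENNReal.toReal_pos hpK.ne' (measure_ne_top p K)
  obtain ⟨L, hL, hLC⟩ : ∃ L, 0 ≤ L ∧ 2 * (C + M) / c < L :=
    ⟨max 0 (2 * (C + M) / c) + 1, by positivity, by linarith [le_max_right 0 (2 * (C + M) / c)]⟩
  rw [div_lt_iff₀ hc] at hLC
  obtain ⟨U₁, hKU₁, hU₁, hqU₁⟩ := exists_isOpen_lt_of_lt K (ENNReal.ofReal (c / 2))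
    (by rw [hqK]; exact ENNReal.ofReal_pos.mpr (by positivity))
  obtain ⟨U₂, hKU₂, hU₂, hνU₂⟩ := exists_isOpen_lt_of_lt K (ENNReal.ofReal (Real.exp (-L)))
    (by rw [hνK]; exact ENNReal.ofReal_pos.mpr (Real.exp_pos _))
  have hqU : q.real (U₁ ∩ U₂) ≤ c / 2 := ENNReal.toReal_le_of_le_ofReal (by positivity)
    ((measure_mono inter_subset_left).trans hqU₁.le)
  have hνU : ν (U₁ ∩ U₂) < ENNReal.ofReal (Real.exp (-L)) :=
    (measure_mono inter_subset_right).trans_lt hνU₂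
  have hνU' : ν.real (U₁ ∩ U₂) ≤ Real.exp (-L) :=
    ENNReal.toReal_le_of_le_ofReal (Real.exp_pos _).le hνU.le
  obtain ⟨a, ha, hval⟩ := exists_contDiff_le_rateObjective (p := p) (q := q) hK (hU₁.inter hU₂)
    (subset_inter hKU₁ hKU₂) (hνU.trans ENNReal.ofReal_lt_top).ne hM hwp hwm hL
  refine ⟨a, ha, ?_⟩
  have hpenalty : M * Real.exp L * ν.real (U₁ ∩ U₂) ≤ M := by
    calc M * Real.exp L * ν.real (U₁ ∩ U₂) ≤ M * Real.exp L * Real.exp (-L) := by gcongr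
      _ = M := by rw [mul_assoc, ← Real.exp_add, add_neg_cancel, Real.exp_zero, mul_one]
  have hq : L * q.real (U₁ ∩ U₂) ≤ L * (c / 2) := by gcongr
  linarith

theorem MeasureTheory.SignedMeasure.exists_contDiff_lt_rateObjective (μ : SignedMeasure E)
    [ν.OuterRegular] {s : Set E} (hs : MeasurableSet s) (hνs : ν s = 0) (hμs : μ s ≠ 0)
    (hwp : ∀ t, wp t ∈ Icc 0 M) (hwm : ∀ t, wm t ∈ Icc 0 M) (C : ℝ) :
    ∃ a : E → ℝ, ContDiff ℝ 1 a ∧ C < rateObjective μ.toJordanDecomposition.posPart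
      μ.toJordanDecomposition.negPart ν wp wm a := by
  have hM : 0 ≤ M := (hwp 0).1.trans (hwp 0).2
  have hpn := μ.toJordanDecomposition.mutuallySingular
  rcases μ.pos_posPart_or_pos_negPart hμs with hpos | hneg
  · obtain ⟨K, hKs, hK, hpK, hnK⟩ := hpn.exists_isClosed_subset_pos_null hs hpos
    exact _root_.exists_contDiff_lt_rateObjective hK hpK hnK (measure_mono_null hKs hνs) hM
      (fun t => (hwp t).2) (fun t => (hwm t).1) C
  · obtain ⟨K, hKs, hK, hnK, hpK⟩ := hpn.symm.exists_isClosed_subset_pos_null hs hneg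
    obtain ⟨a, ha, hC⟩ := _root_.exists_contDiff_lt_rateObjective hK hnK hpK
      (measure_mono_null hKs hνs) hM (fun t => (hwm t).2) (fun t => (hwp t).1) C
    exact ⟨-a, ha.neg, by rwa [rateObjective_neg]⟩

end TestFunction

theorem not_absolutely_continuous_infinite_rate_general (T M : ℝ)
    (μ : SignedMeasure ℝ)
    (hsing : ∃ s : Set ℝ, MeasurableSet s ∧ volume s = 0 ∧ μ s ≠ 0)
    (wp wm : ℝ → ℝ)
    (hwp : ∀ t, wp t ∈ Set.Icc (0 : ℝ) M) (hwm : ∀ t, wm t ∈ Set.Icc (0 : ℝ) M) :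
    sSup {v : EReal | ∃ a : ℝ → ℝ, ContDiff ℝ 1 a ∧
        v = ((((∫ t, a t ∂μ.toJordanDecomposition.posPart)
              - (∫ t, a t ∂μ.toJordanDecomposition.negPart)
              - ∫ t in Set.Ioc 0 T,
                  (wp t * (Real.exp (a t) - 1) + wm t * (Real.exp (-a t) - 1))) : ℝ) : EReal)}
      = ⊤ := by
  rw [sSup_eq_top]
  intro b hb
  obtain ⟨C, hbC, -⟩ := EReal.lt_iff_exists_real_btwn.mp hb
  obtain ⟨s, hs, hs0, hμs⟩ := hsing
  obtain ⟨a, ha, hC⟩ := μ.exists_contDiff_lt_rateObjective (ν := volume.restrict (Ioc 0 T)) hs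
    (Measure.restrict_le_self.absolutelyContinuous hs0) hμs hwp hwm C
  exact ⟨_, ⟨a, ha, rfl⟩, hbC.trans (EReal.coe_lt_coe_iff.mpr hC)⟩

/-- If the path is not absolutely continuous (i.e. its Stieltjes
measure `μ` charges some Lebesgue-null set), then the random-walk rate function
is infinite:
`sup_{a ∈ C¹} { ∫ a dμ − ∫₀ᵀ ( w⁺(e^a − 1) + w⁻(e^{−a} − 1) ) dt } = +∞`. -/
theorem not_absolutely_continuous_infinite_rate (T M : ℝ) (hT : 0 < T) (hM : 0 < M)
    (μ : SignedMeasure ℝ)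
    (hconc : ∀ s : Set ℝ, MeasurableSet s → s ∩ Set.Icc 0 T = ∅ → μ s = 0)
    (hsing : ∃ s : Set ℝ, MeasurableSet s ∧ volume s = 0 ∧ μ s ≠ 0)
    (wp wm : ℝ → ℝ) (hwpmeas : Measurable wp) (hwmmeas : Measurable wm)
    (hwp : ∀ t, wp t ∈ Set.Icc (0 : ℝ) M) (hwm : ∀ t, wm t ∈ Set.Icc (0 : ℝ) M) :
    sSup {v : EReal | ∃ a : ℝ → ℝ, ContDiff ℝ 1 a ∧
        v = ((((∫ t, a t ∂μ.toJordanDecomposition.posPart)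
              - (∫ t, a t ∂μ.toJordanDecomposition.negPart)
              - ∫ t in Set.Ioc 0 T,
                  (wp t * (Real.exp (a t) - 1) + wm t * (Real.exp (-a t) - 1))) : ℝ) : EReal)}
      = ⊤ :=
  not_absolutely_continuous_infinite_rate_general T M μ hsing wp wm hwp hwm

end
end

section
/- Minimax Lemma. Let {F_i ; i ∈ I} be a family of upper semicontinuous functions from a Polish space E to [−∞, +∞), and let {P_n ; n ∈ ℕ} be a sequence of Borel probability measures on E. Assume that for every open set A ⊆ E, limsup_{n→∞} (1/n) log P_n(A) ≤ inf_{i ∈ I} sup_{x ∈ A} F_i(x). Then for every compact set K ⊆ E, limsup_{n→∞} (1/n) log P_n(K) ≤ sup_{x ∈ K} inf_{i ∈ I} F_i(x). -/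
/-!
Fix `b > sup_{x ∈ K} inf_i F_i x`. By upper semicontinuity the sets `{F_i < b}` are open and
they cover `K`, so finitely many of them do. The exponential rate of a finite union is the
maximum of the rates (principle of the largest term), and by hypothesis the rate of
`{F_i < b}` is at most `sup_{F_i < b} F_i ≤ b`.
-/

open MeasureTheory Filter
open scoped ENNReal

noncomputable section

/-- `log` of a nonnegative extended real, with the convention `log 0 = −∞`
(used for `log P_n(A)` when `P_n(A) = 0`). -/
def llog (r : ℝ≥0∞) : EReal :=
  if r = 0 then ⊥ else ((Real.log r.toReal : ℝ) : EReal)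

lemma llog_zero : llog 0 = ⊥ := if_pos rfl

lemma llog_of_ne_zero {r : ℝ≥0∞} (hr : r ≠ 0) :
    llog r = ((Real.log r.toReal : ℝ) : EReal) :=
  if_neg hr

lemma llog_mono {a b : ℝ≥0∞} (hab : a ≤ b) (hb : b ≠ ∞) : llog a ≤ llog b := by
  rcases eq_or_ne a 0 with rfl | ha
  · simp [llog_zero]
  have ha' : a ≠ ∞ := ne_top_of_le_ne_top hb hab
  rw [llog_of_ne_zero ha, llog_of_ne_zero (pos_of_ne_zero ha |>.trans_le hab).ne',
    EReal.coe_le_coe_iff]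
  exact Real.log_le_log (ENNReal.toReal_pos ha ha') (ENNReal.toReal_mono hb hab)

lemma llog_mul {a b : ℝ≥0∞} (ha : a ≠ ∞) (hb : b ≠ ∞) :
    llog (a * b) = llog a + llog b := by
  rcases eq_or_ne a 0 with rfl | ha0
  · simp [llog_zero]
  rcases eq_or_ne b 0 with rfl | hb0
  · simp [llog_zero]
  rw [llog_of_ne_zero (mul_ne_zero ha0 hb0), llog_of_ne_zero ha0, llog_of_ne_zero hb0,
    ENNReal.toReal_mul, Real.log_mul (ENNReal.toReal_ne_zero.2 ⟨ha0, ha⟩)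
      (ENNReal.toReal_ne_zero.2 ⟨hb0, hb⟩), EReal.coe_add]

lemma llog_max {a b : ℝ≥0∞} (ha : a ≠ ∞) (hb : b ≠ ∞) :
    llog (max a b) = max (llog a) (llog b) := by
  rcases le_total a b with h | h
  · rw [max_eq_right h, max_eq_right (llog_mono h hb)]
  · rw [max_eq_left h, max_eq_left (llog_mono h ha)]

lemma llog_measure_union_le {α : Type*} [MeasurableSpace α] (μ : Measure α)
    [IsFiniteMeasure μ] (s t : Set α) :
    llog (μ (s ∪ t)) ≤ (Real.log 2 : EReal) + max (llog (μ s)) (llog (μ t)) :=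
  calc llog (μ (s ∪ t)) ≤ llog (2 * max (μ s) (μ t)) := by
        refine llog_mono ((measure_union_le s t).trans ?_)
          (ENNReal.mul_ne_top (by simp) (max_ne_top (measure_ne_top _ _) (measure_ne_top _ _)))
        rw [two_mul]
        exact add_le_add (le_max_left _ _) (le_max_right _ _)
    _ = (Real.log 2 : EReal) + max (llog (μ s)) (llog (μ t)) := by
        rw [llog_mul (by simp) (max_ne_top (measure_ne_top _ _) (measure_ne_top _ _)),
          llog_max (measure_ne_top _ _) (measure_ne_top _ _), llog_of_ne_zero two_ne_zero]
        norm_num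

def upperRate {α : Type*} [MeasurableSpace α] (P : ℕ → Measure α) (s : Set α) : EReal :=
  limsup (fun n : ℕ => (((n : ℝ)⁻¹ : ℝ) : EReal) * llog (P n s)) atTop

section upperRate

variable {α : Type*} [MeasurableSpace α] (P : ℕ → Measure α)

lemma upperRate_mono [∀ n, IsFiniteMeasure (P n)] {s t : Set α} (hst : s ⊆ t) :
    upperRate P s ≤ upperRate P t :=
  limsup_le_limsup (Eventually.of_forall fun n =>
    mul_le_mul_of_nonneg_left (llog_mono (measure_mono hst) (measure_ne_top _ _))
      (EReal.coe_nonneg.2 (by positivity)))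
    (by isBoundedDefault) (by isBoundedDefault)

lemma upperRate_empty : upperRate P ∅ = ⊥ := by
  refine le_bot_iff.1 (limsup_le_of_le (by isBoundedDefault) ?_)
  filter_upwards [eventually_gt_atTop 0] with n hn
  rw [measure_empty, llog_zero, EReal.coe_mul_bot_of_pos (inv_pos.2 (Nat.cast_pos.2 hn))]

/-- The factor `2` in `P n (s ∪ t) ≤ 2 * max (P n s) (P n t)` only costs `(log 2) / n → 0`. -/
lemma upperRate_union_le [∀ n, IsFiniteMeasure (P n)] (s t : Set α) :
    upperRate P (s ∪ t) ≤ max (upperRate P s) (upperRate P t) := by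
  set c : ℕ → EReal := fun n => (((n : ℝ)⁻¹ * Real.log 2 : ℝ) : EReal)
  have hc : Tendsto c atTop (nhds 0) := by
    have h0 : Tendsto (fun n : ℕ => (n : ℝ)⁻¹ * Real.log 2) atTop (nhds 0) := by
      simpa using (tendsto_inv_atTop_zero.comp tendsto_natCast_atTop_atTop).mul_const (Real.log 2)
    exact EReal.tendsto_coe.2 h0
  have hpointwise (n : ℕ) : (((n : ℝ)⁻¹ : ℝ) : EReal) * llog (P n (s ∪ t)) ≤
      c n + max ((((n : ℝ)⁻¹ : ℝ) : EReal) * llog (P n s))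
        ((((n : ℝ)⁻¹ : ℝ) : EReal) * llog (P n t)) := by
    have hn : (0 : EReal) ≤ (((n : ℝ)⁻¹ : ℝ) : EReal) :=
      EReal.coe_nonneg.2 (by positivity)
    calc _ ≤ (((n : ℝ)⁻¹ : ℝ) : EReal) *
            (Real.log 2 + max (llog (P n s)) (llog (P n t))) :=
          mul_le_mul_of_nonneg_left (llog_measure_union_le (P n) s t) hn
      _ = _ := by
          rw [EReal.left_distrib_of_nonneg_of_ne_top hn (EReal.coe_ne_top _),
            ← (monotone_mul_left_of_nonneg hn).map_max, ← EReal.coe_mul]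
  calc upperRate P (s ∪ t) ≤ limsup (c + fun n => max _ _) atTop :=
        limsup_le_limsup (Eventually.of_forall hpointwise)
    _ ≤ limsup c atTop + limsup (fun n => max _ _) atTop := by
        apply EReal.limsup_add_le <;> simp [hc.limsup_eq]
    _ = _ := by rw [hc.limsup_eq, zero_add, limsup_max]; rfl

lemma upperRate_biUnion_le [∀ n, IsFiniteMeasure (P n)] {ι : Type*} (t : Finset ι)
    (U : ι → Set α) : upperRate P (⋃ i ∈ t, U i) ≤ t.sup fun i => upperRate P (U i) := by
  classical
  induction t using Finset.induction_on with
  | empty => simp [upperRate_empty]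
  | insert a t _ ih =>
    rw [Finset.set_biUnion_insert, Finset.sup_insert]
    exact (upperRate_union_le P _ _).trans (sup_le_sup_left ih _)

end upperRate

theorem minimax_lemma_general {E : Type*} [TopologicalSpace E]
    [MeasurableSpace E]
    {ι : Type*} (F : ι → E → EReal)
    (husc : ∀ i, UpperSemicontinuous (F i))
    (P : ℕ → Measure E) (hP : ∀ n, IsProbabilityMeasure (P n))
    (hopen : ∀ A : Set E, IsOpen A →
      limsup (fun n : ℕ => (((n : ℝ)⁻¹ : ℝ) : EReal) * llog (P n A)) atTop
        ≤ ⨅ i, ⨆ x ∈ A, F i x) :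
    ∀ K : Set E, IsCompact K →
      limsup (fun n : ℕ => (((n : ℝ)⁻¹ : ℝ) : EReal) * llog (P n K)) atTop
        ≤ ⨆ x ∈ K, ⨅ i, F i x := by
  intro K hK
  refine le_of_forall_gt_imp_ge_of_dense fun b hb => ?_
  set U : ι → Set E := fun i => F i ⁻¹' Set.Iio b
  have hU : ∀ i, IsOpen (U i) := fun i => (husc i).isOpen_preimage b
  have hKU : K ⊆ ⋃ i, U i := fun x hx =>
    Set.mem_iUnion.2 (iInf_lt_iff.1 ((le_iSup₂ (f := fun x _ => ⨅ i, F i x) x hx).trans_lt hb))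
  obtain ⟨t, htK⟩ := hK.elim_finite_subcover U hU hKU
  calc upperRate P K ≤ upperRate P (⋃ i ∈ t, U i) := upperRate_mono P htK
    _ ≤ t.sup fun i => upperRate P (U i) := upperRate_biUnion_le P t U
    _ ≤ b := Finset.sup_le fun i _ => (hopen (U i) (hU i)).trans <|
        (iInf_le _ i).trans <| iSup₂_le fun _ hx => le_of_lt hx

/-- **Minimax Lemma.** Let `{F_i}` be upper semicontinuous functions
from a Polish space `E` to `[−∞, +∞)` and `{P_n}` Borel probability measures on `E`.
If `limsup (1/n) log P_n(A) ≤ inf_i sup_{x ∈ A} F_i(x)` for every open `A`, then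
`limsup (1/n) log P_n(K) ≤ sup_{x ∈ K} inf_i F_i(x)` for every compact `K`. -/
theorem minimax_lemma {E : Type*} [TopologicalSpace E] [PolishSpace E]
    [MeasurableSpace E] [BorelSpace E]
    {ι : Type*} (F : ι → E → EReal)
    (husc : ∀ i, UpperSemicontinuous (F i)) (hne : ∀ i x, F i x ≠ ⊤)
    (P : ℕ → Measure E) (hP : ∀ n, IsProbabilityMeasure (P n))
    (hopen : ∀ A : Set E, IsOpen A →
      limsup (fun n : ℕ => (((n : ℝ)⁻¹ : ℝ) : EReal) * llog (P n A)) atTop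
        ≤ ⨅ i, ⨆ x ∈ A, F i x) :
    ∀ K : Set E, IsCompact K →
      limsup (fun n : ℕ => (((n : ℝ)⁻¹ : ℝ) : EReal) * llog (P n K)) atTop
        ≤ ⨆ x ∈ K, ⨅ i, F i x :=
  minimax_lemma_general F husc P hP hopen
end
end
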